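/- arXiv:1602.07171 — 9 statements merged into one kernel-verified Lean document; each statement's English description precedes it below -/
import Mathlib

section
/- If G is a hypohamiltonian graph containing a triangle T, then every vertex of T has degree at least 4 in G. -/
open SimpleGraph

/-- A graph is hamiltonian if it has a cycle passing through all vertices. -/
def IsHamiltonianGraph {β : Type*} [DecidableEq β] (H : SimpleGraph β) : Prop :=
  ∃ (a : β) (p : H.Walk a a), p.IsHamiltonianCycle

/-- A finite graph is hypohamiltonian if it is not hamiltonian but every
vertex-deleted subgraph is hamiltonian. -/
def Hypohamiltonian {α : Type*} [Fintype α] [DecidableEq α] (G : SimpleGraph α) : Prop :=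
  Nonempty α ∧ ¬ IsHamiltonianGraph G ∧
    ∀ v : α, IsHamiltonianGraph (G.induce ({v}ᶜ : Set α))

section Aux

variable {α : Type*} [DecidableEq α] {G : SimpleGraph α}

/-- In a closed walk, every support vertex is in the support tail. -/
lemma closed_mem_support_tail {a v : α} {q : G.Walk a a} (hq : q ≠ Walk.nil)
    (hv : v ∈ q.support) : v ∈ q.support.tail := by
  cases q with
  | nil => exact absurd rfl hq
  | cons h r =>
    simp only [Walk.support_cons, List.tail_cons]
    rcases (by simpa using hv : v = a ∨ v ∈ r.support) with h' | h'
    · exact h' ▸ r.end_mem_support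
    · exact h'

lemma isHamCycle_of_forall_mem {a : α} {q : G.Walk a a} (hq : q.IsCycle)
    (hcov : ∀ v, v ∈ q.support) : q.IsHamiltonianCycle := by
  rw [Walk.isHamiltonianCycle_isCycle_and_isHamiltonian_tail]
  refine ⟨hq, fun v => ?_⟩
  rw [Walk.support_tail_of_not_nil _ hq.not_nil]
  exact List.count_eq_one_of_mem hq.support_nodup
    (closed_mem_support_tail hq.ne_nil (hcov v))

lemma isCycle_reverse {u : α} {p : G.Walk u u} (h : p.IsCycle) : p.reverse.IsCycle := by
  refine ⟨⟨Walk.IsTrail.reverse p h.isTrail, ?_⟩, ?_⟩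
  · intro hn
    exact h.ne_nil (by simpa using congrArg Walk.reverse hn)
  · cases p with
    | nil => exact absurd rfl h.ne_nil
    | cons hadj r =>
      have hnd : r.support.Nodup := by simpa using h.support_nodup
      have hne : r.support ≠ [] := r.support_ne_nil
      have hrs : r.support.dropLast ++ [u] = r.support := by
        conv_rhs => rw [← List.dropLast_append_getLast hne]
        rw [r.getLast_support]
      set d := r.support.dropLast with hd
      have hgoal : (Walk.cons hadj r).reverse.support.tail = d.reverse ++ [u] := by
        rw [Walk.support_reverse, Walk.support_cons, ← hrs]
        simp
      rw [hgoal]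
      have : (d.reverse ++ [u]).Nodup := by
        refine ((d.reverse_perm.append_right [u])).symm.nodup ?_
        rw [hrs]; exact hnd
      exact this

/-- The surgery: insert `b` between `a` and `c` on a cycle through all vertices but `b`. -/
lemma surgery {a b c : α} (hab : G.Adj a b) (hbc : G.Adj b c) (hac : G.Adj a c)
    (r : G.Walk c a) (hcyc : (Walk.cons hac r).IsCycle)
    (hb : b ∉ (Walk.cons hac r).support)
    (hcov : ∀ v, v ≠ b → v ∈ (Walk.cons hac r).support) :
    ∃ (x : α) (p : G.Walk x x), p.IsHamiltonianCycle := by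
  have hbr : b ∉ r.support := fun h => hb (by simp [h])
  have hredges : r.edges.Nodup ∧ s(a, c) ∉ r.edges := by
    have := hcyc.isTrail
    rw [Walk.isTrail_cons] at this
    exact ⟨this.1.edges_nodup, this.2⟩
  have hrsupp : r.support.Nodup := by simpa using hcyc.support_nodup
  refine ⟨a, Walk.cons hab (Walk.cons hbc r), isHamCycle_of_forall_mem ⟨⟨⟨?_⟩, by simp⟩, ?_⟩ ?_⟩
  · -- edges nodup
    simp only [Walk.edges_cons, List.nodup_cons]
    refine ⟨?_, ?_, hredges.1⟩
    · simp only [List.mem_cons]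
      push_neg
      refine ⟨?_, ?_⟩
      · intro h
        rw [Sym2.eq_iff] at h
        rcases h with ⟨h1, _⟩ | ⟨h1, _⟩
        · exact hab.ne h1
        · exact hac.ne h1
      · intro h
        exact hbr (Walk.snd_mem_support_of_mem_edges r h)
    · intro h
      exact hbr (Walk.fst_mem_support_of_mem_edges r h)
  · -- support tail nodup
    simp only [Walk.support_cons, List.tail_cons, List.nodup_cons]
    exact ⟨hbr, hrsupp⟩
  · -- covers all vertices
    intro v
    by_cases hv : v = b
    · simp [hv]
    · have := hcov v hv
      simp only [Walk.support_cons, List.mem_cons] at this ⊢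
      tauto

end Aux

section Core

variable {α : Type*} [Fintype α] [DecidableEq α] {G : SimpleGraph α}

lemma core [DecidableRel G.Adj]
    (hnot : ¬ ∃ (x : α) (p : G.Walk x x), p.IsHamiltonianCycle)
    {a b c : α} (hab : G.Adj a b) (hbc : G.Adj b c) (hac : G.Adj a c)
    (hdeg : G.degree a ≤ 3)
    (q : G.Walk a a) (hq : q.IsCycle) (hbq : b ∉ q.support)
    (hcov : ∀ v, v ≠ b → v ∈ q.support) : False := by
  cases q with
  | nil => exact absurd rfl hq.ne_nil
  | cons hau r =>
    rename_i u
    cases hrev : (Walk.cons hau r).reverse with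
    | nil =>
      have := congrArg Walk.length hrev
      simp [Walk.length_reverse] at this
    | cons haw r' =>
      rename_i w
      have hu_mem : u ∈ (Walk.cons hau r).support := by
        simp [r.start_mem_support]
      have hw_mem : w ∈ (Walk.cons hau r).support := by
        have : w ∈ (Walk.cons hau r).reverse.support := by
          rw [hrev]; simp [r'.start_mem_support]
        rwa [Walk.support_reverse, List.mem_reverse] at this
      have hqtrail := hq.isTrail
      rw [Walk.isTrail_cons] at hqtrail
      have hredne : r.edges ≠ [] := by
        intro h
        have h3 := hq.three_le_length
        have := congrArg List.length h
        simp [Walk.length_edges] at this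
        simp [Walk.nil_iff_length_eq.mp this] at h3
      have hlast : s(a, w) ∈ r.edges := by
        have hE : s(a,u) :: r.edges = r'.edges.reverse ++ [s(a,w)] := by
          have h1 := congrArg Walk.edges hrev
          rw [Walk.edges_reverse] at h1
          have h2 := congrArg List.reverse h1
          simpa [Walk.edges_cons] using h2
        have h1 : (s(a,u) :: r.edges).getLast (by simp) = s(a,w) := by
          simp only [hE]
          exact List.getLast_append _
        rw [List.getLast_cons hredne] at h1
        exact h1 ▸ List.getLast_mem hredne
      have huw : u ≠ w := by
        rintro rfl
        exact hqtrail.2 hlast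
      by_cases hcu : u = c
      · subst hcu
        exact hnot (surgery hab hbc hac r hq hbq hcov)
      · by_cases hcw : w = c
        · subst hcw
          have hqrev := isCycle_reverse hq
          rw [hrev] at hqrev
          have hsupp_eq : (Walk.cons haw r').support = (Walk.cons hau r).support.reverse := by
            rw [← hrev, Walk.support_reverse]
          refine hnot (surgery hab hbc haw r' hqrev ?_ ?_)
          · rw [hsupp_eq, List.mem_reverse]; exact hbq
          · intro v hv
            rw [hsupp_eq, List.mem_reverse]; exact hcov v hv
        · -- pigeonhole: b, c, u, w are 4 distinct neighbours of a
          have hbu : b ≠ u := fun h => hbq (h ▸ hu_mem)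
          have hbw : b ≠ w := fun h => hbq (h ▸ hw_mem)
          have hsub : ({b, c, u, w} : Finset α) ⊆ G.neighborFinset a := by
            intro v hv
            simp only [Finset.mem_insert, Finset.mem_singleton] at hv
            rw [SimpleGraph.mem_neighborFinset]
            rcases hv with rfl | rfl | rfl | rfl
            · exact hab
            · exact hac
            · exact hau
            · exact haw
          have hcard : ({b, c, u, w} : Finset α).card = 4 := by
            rw [Finset.card_insert_of_notMem (by simp [hbc.ne, hbu, hbw]),
              Finset.card_insert_of_notMem (by simp [Ne.symm hcu, Ne.symm hcw]),
              Finset.card_insert_of_notMem (by simp [huw]), Finset.card_singleton]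
          have h4 : 4 ≤ G.degree a := by
            rw [← SimpleGraph.card_neighborFinset_eq_degree, ← hcard]
            exact Finset.card_le_card hsub
          omega

end Core
section Deg

variable {α : Type*} [Fintype α] [DecidableEq α] {G : SimpleGraph α}

lemma degree_ge [DecidableRel G.Adj] (hG : Hypohamiltonian G)
    {a b c : α} (hab : G.Adj a b) (hbc : G.Adj b c) (hac : G.Adj a c) :
    4 ≤ G.degree a := by
  by_contra hdeg
  push_neg at hdeg
  have hdeg3 : G.degree a ≤ 3 := by omega
  obtain ⟨x, p, hp⟩ := hG.2.2 b
  let f : G.induce ({b}ᶜ : Set α) →g G := ⟨Subtype.val, fun {x y} h => h⟩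
  have hinj : Function.Injective f := Subtype.val_injective
  set q0 : G.Walk (x : α) (x : α) := p.map f with hq0def
  have hq0 : q0.IsCycle := hp.isCycle.map hinj
  have hb0 : b ∉ q0.support := by
    rw [hq0def, Walk.support_map]
    simp only [List.mem_map, not_exists, not_and]
    rintro ⟨y, hy⟩ _ h
    exact hy (show y ∈ ({b} : Set α) by
      have : y = b := h
      simp [this])
  have hcov0 : ∀ v, v ≠ b → v ∈ q0.support := by
    intro v hv
    rw [hq0def, Walk.support_map]
    exact List.mem_map.2 ⟨⟨v, by simp [hv]⟩, hp.mem_support _, rfl⟩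
  have ha0 : a ∈ q0.support := hcov0 a hab.ne
  have hbrot : b ∉ (q0.rotate a ha0).support := by
    intro h
    have h1 : b ∈ (q0.rotate a ha0).support.tail :=
      closed_mem_support_tail (hq0.rotate ha0).ne_nil h
    have h2 : b ∈ q0.support.tail := (Walk.support_rotate q0 a ha0).mem_iff.mp h1
    exact hb0 (List.mem_of_mem_tail h2)
  have hcovrot : ∀ v, v ≠ b → v ∈ (q0.rotate a ha0).support := by
    intro v hv
    have h1 := closed_mem_support_tail hq0.ne_nil (hcov0 v hv)
    exact List.mem_of_mem_tail ((Walk.support_rotate q0 a ha0).mem_iff.mpr h1)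
  exact core hG.2.1 hab hbc hac hdeg3 (q0.rotate a ha0) (hq0.rotate ha0) hbrot hcovrot

end Deg

theorem hypohamiltonian_triangle_degree {α : Type*} [Fintype α] [DecidableEq α]
    (G : SimpleGraph α) [DecidableRel G.Adj] (hG : Hypohamiltonian G)
    (a b c : α) (hab : G.Adj a b) (hbc : G.Adj b c) (hac : G.Adj a c) :
    4 ≤ G.degree a ∧ 4 ≤ G.degree b ∧ 4 ≤ G.degree c := by
  exact ⟨degree_ge hG hab hbc hac, degree_ge hG hab.symm hac hbc,
    degree_ge hG hac.symm hab hbc.symm⟩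
end

section
/- Let G be a hypohamiltonian graph containing a diamond with vertices a, b, c, d and central edge ac (i.e., ab, bc, cd, da, ac are edges). Then the vertices a and c each have degree at least 5 in G. -/
open SimpleGraph

namespace HypoAux

open SimpleGraph.Walk

variable {α : Type*} [DecidableEq α] {G : SimpleGraph α}

lemma support_getElem {u v : α} (p : G.Walk u v) (n : ℕ) (hn : n < p.support.length) :
    p.support[n] = p.getVert n := by
  induction p generalizing n with
  | nil =>
    simp only [Walk.support_nil, List.length_singleton] at hn
    interval_cases n
    rfl
  | cons h q ih =>
    cases n with
    | zero => simp
    | succ n =>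
      simp only [Walk.support_cons, List.length_cons] at hn
      simp only [Walk.support_cons, List.getElem_cons_succ, Walk.getVert_cons_succ]
      exact ih n (Nat.lt_of_succ_lt_succ hn)

lemma mem_tail_support {v x : α} {w : G.Walk v v} (hw : ¬ w.Nil) (hx : x ∈ w.support) :
    x ∈ w.support.tail := by
  rw [w.support_eq_cons] at hx
  rcases List.mem_cons.mp hx with rfl | h
  · rw [← Walk.support_tail_of_not_nil w hw]
    exact w.tail.end_mem_support
  · exact h

lemma isCycle_reverse {v : α} {q : G.Walk v v} (hq : q.IsCycle) : q.reverse.IsCycle := by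
  have h3 := hq.three_le_length
  rw [Walk.isCycle_def] at hq ⊢
  obtain ⟨ht, hne, hnd⟩ := hq
  refine ⟨ht.reverse, ?_, ?_⟩
  · intro h
    apply hne
    have := congrArg Walk.reverse h
    simpa using this
  · rw [Walk.support_reverse]
    have hlen4 : q.support.tail.length = q.length := by
      rw [List.length_tail, q.length_support]
      omega
    have hlen : q.support.tail ≠ [] := by
      intro h
      rw [h] at hlen4
      simp at hlen4
      omega
    have hlast : q.support.tail.getLast hlen = v := by
      rw [List.getLast_tail]
      exact q.getLast_support
    have hdecomp : q.support.tail = q.support.tail.dropLast ++ [v] := by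
      conv_lhs => rw [← List.dropLast_append_getLast hlen]
      rw [hlast]
    have hnd' : (q.support.tail.dropLast ++ [v]).Nodup := hdecomp ▸ hnd
    rw [q.support_eq_cons, hdecomp]
    simp only [List.reverse_cons, List.reverse_append, List.reverse_singleton]
    simp only [List.nodup_append, List.nodup_singleton, List.disjoint_singleton, and_true,
      true_and] at hnd'
    simp [List.nodup_append, List.disjoint_singleton, hnd'.1, hnd'.2]
    exact fun a ha => hnd'.2 a ha v (List.mem_singleton_self v)

lemma insert_ham {c x : α} (hxc : G.Adj x c)
    {q : G.Walk x x} (hq : q.IsCycle) (hcs : c ∉ q.support)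
    (hcov : ∀ v : α, v ≠ c → v ∈ q.support)
    (hadj : G.Adj c (q.getVert 1)) : IsHamiltonianGraph G := by
  have hn : ¬ q.Nil := hq.not_nil
  have htp : q.tail.IsPath := by
    refine Walk.IsPath.mk' ?_
    rw [Walk.support_tail_of_not_nil q hn]
    exact hq.support_nodup
  have hct : c ∉ q.tail.support := by
    intro h
    apply hcs
    rw [← Walk.cons_support_tail hn]
    exact List.mem_cons_of_mem _ h
  have hconsp : (Walk.cons hadj q.tail).IsPath := htp.cons hct
  have hcyc : (Walk.cons hxc (Walk.cons hadj q.tail)).IsCycle := by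
    rw [Walk.cons_isCycle_iff]
    refine ⟨hconsp, ?_⟩
    simp only [Walk.edges_cons, List.mem_cons]
    rintro (h | h)
    · rw [Sym2.eq_iff] at h
      rcases h with ⟨rfl, -⟩ | ⟨h1, -⟩
      · exact hxc.ne rfl
      · exact (q.adj_snd hn).ne h1
    · exact hct (Walk.snd_mem_support_of_mem_edges q.tail h)
  refine ⟨x, Walk.cons hxc (Walk.cons hadj q.tail), ?_⟩
  rw [Walk.isHamiltonianCycle_iff_isCycle_and_support_count_tail_eq_one]
  refine ⟨hcyc, fun v => ?_⟩
  simp only [Walk.support_cons, List.tail_cons]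
  by_cases hv : v = c
  · subst hv
    rw [List.count_cons_self]
    have h0 : q.tail.support.count v = 0 := List.count_eq_zero.2 hct
    omega
  · rw [List.count_cons_of_ne (Ne.symm hv)]
    apply List.count_eq_one_of_mem htp.support_nodup
    have hvq : v ∈ q.support := hcov v hv
    rw [← Walk.cons_support_tail hn] at hvq
    rcases List.mem_cons.mp hvq with rfl | h
    · exact q.tail.end_mem_support
    · exact h

lemma deg_five {α : Type*} [Fintype α] [DecidableEq α]
    (G : SimpleGraph α) [DecidableRel G.Adj] (hG : Hypohamiltonian G)
    (a b c d : α) (hbd : b ≠ d)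
    (hab : G.Adj a b) (hbc : G.Adj b c) (hcd : G.Adj c d) (hda : G.Adj d a)
    (hac : G.Adj a c) : 5 ≤ G.degree a := by
  obtain ⟨-, hnh, hdel⟩ := hG
  obtain ⟨a₀, p, hp⟩ := hdel c
  have haS : a ∈ ({c}ᶜ : Set α) := by simp [hac.ne]
  have hmem : (⟨a, haS⟩ : ({c}ᶜ : Set α)) ∈ p.support := hp.mem_support _
  have hc' : (p.rotate _ hmem).IsCycle := hp.isCycle.rotate hmem
  let f : G.induce ({c}ᶜ : Set α) ↪g G := SimpleGraph.Embedding.induce ({c}ᶜ : Set α)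
  let q : G.Walk a a := (p.rotate _ hmem).map f.toHom
  have hqc : q.IsCycle := hc'.map f.injective
  have hqn : ¬ q.Nil := hqc.not_nil
  have hcs : c ∉ q.support := by
    intro h
    rw [show q.support = _ from Walk.support_map _ _] at h
    obtain ⟨⟨v, hv⟩, -, hveq⟩ := List.mem_map.mp h
    simp only [Set.mem_compl_iff, Set.mem_singleton_iff] at hv
    exact hv hveq
  have hcov : ∀ v : α, v ≠ c → v ∈ q.support := by
    intro v hv
    have hvS : v ∈ ({c}ᶜ : Set α) := by simp [hv]
    have h1 : (⟨v, hvS⟩ : ({c}ᶜ : Set α)) ∈ p.support := hp.mem_support _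
    have h2 : (⟨v, hvS⟩ : ({c}ᶜ : Set α)) ∈ (p.rotate _ hmem).support := by
      have h3 := mem_tail_support hp.isCycle.not_nil h1
      have h4 := (Walk.support_rotate p _ hmem).perm.mem_iff (a := (⟨v, hvS⟩ : ({c}ᶜ : Set α)))
      exact List.mem_of_mem_tail (h4.mpr h3)
    rw [show q.support = _ from Walk.support_map _ _]
    exact List.mem_map.mpr ⟨_, h2, rfl⟩
  -- the two cycle-neighbors of a
  set u : α := q.getVert 1 with hu
  set w : α := q.reverse.getVert 1 with hw
  have hau : G.Adj a u := q.adj_snd hqn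
  have hrc : q.reverse.IsCycle := isCycle_reverse hqc
  have hrcs : c ∉ q.reverse.support := by rwa [Walk.support_reverse, List.mem_reverse]
  have hrcov : ∀ v : α, v ≠ c → v ∈ q.reverse.support := by
    intro v hv
    rw [Walk.support_reverse, List.mem_reverse]
    exact hcov v hv
  have haw : G.Adj a w := q.reverse.adj_snd hrc.not_nil
  have hcu : ¬ G.Adj c u := fun h => hnh (insert_ham hac hqc hcs hcov h)
  have hcw : ¬ G.Adj c w := fun h => hnh (insert_ham hac hrc hrcs hrcov h)
  -- u ≠ w
  have h3 := hqc.three_le_length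
  have hwq : w = q.getVert (q.length - 1) := by rw [hw, Walk.getVert_reverse]
  have huw : u ≠ w := by
    intro h
    have hnd := hqc.support_nodup
    have hlen : q.support.tail.length = q.length := by
      simp [List.length_tail, q.length_support]
    have e1 : q.support.tail[0]'(by omega) = u := by
      rw [List.getElem_tail, support_getElem q 1 (by rw [q.length_support]; omega)]
    have e2 : q.support.tail[q.length - 2]'(by omega) = w := by
      rw [List.getElem_tail, support_getElem q (q.length - 2 + 1)
        (by rw [q.length_support]; omega), hwq]
      congr 1
      omega
    have := hnd.getElem_inj_iff.mp (e1.trans (h.trans e2.symm))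
    omega
  -- u, w distinct from b, c, d
  have humem : u ∈ q.support := Walk.mem_support_iff_exists_getVert.mpr ⟨1, rfl, by omega⟩
  have hwmem : w ∈ q.reverse.support :=
    Walk.mem_support_iff_exists_getVert.mpr ⟨1, rfl, by rw [Walk.length_reverse]; omega⟩
  have huc : u ≠ c := fun h => hcs (h ▸ humem)
  have hwc : w ≠ c := fun h => hrcs (h ▸ hwmem)
  have hub : u ≠ b := fun h => hcu (h ▸ hbc.symm)
  have hud : u ≠ d := fun h => hcu (h ▸ hcd)
  have hwb : w ≠ b := fun h => hcw (h ▸ hbc.symm)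
  have hwd : w ≠ d := fun h => hcw (h ▸ hcd)
  -- conclude
  have hsub : ({b, c, d, u, w} : Finset α) ⊆ G.neighborFinset a := by
    intro v hv
    rw [SimpleGraph.mem_neighborFinset]
    simp only [Finset.mem_insert, Finset.mem_singleton] at hv
    rcases hv with rfl | rfl | rfl | rfl | rfl
    · exact hab
    · exact hac
    · exact hda.symm
    · exact hau
    · exact haw
  have hcard : ({b, c, d, u, w} : Finset α).card = 5 := by
    rw [Finset.card_insert_of_notMem (by simp [hbc.ne, hbd, hub.symm, hwb.symm]),
      Finset.card_insert_of_notMem (by simp [hcd.ne, huc.symm, hwc.symm]),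
      Finset.card_insert_of_notMem (by simp [hud.symm, hwd.symm]),
      Finset.card_insert_of_notMem (by simp [huw]),
      Finset.card_singleton]
  calc 5 = ({b, c, d, u, w} : Finset α).card := hcard.symm
    _ ≤ (G.neighborFinset a).card := Finset.card_le_card hsub
    _ = G.degree a := rfl

end HypoAux

theorem hypohamiltonian_diamond_degree {α : Type*} [Fintype α] [DecidableEq α]
    (G : SimpleGraph α) [DecidableRel G.Adj] (hG : Hypohamiltonian G)
    (a b c d : α) (hbd : b ≠ d)
    (hab : G.Adj a b) (hbc : G.Adj b c) (hcd : G.Adj c d) (hda : G.Adj d a)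
    (hac : G.Adj a c) :
    5 ≤ G.degree a ∧ 5 ≤ G.degree c := by
  exact ⟨HypoAux.deg_five G hG a b c d hbd hab hbc hcd hda hac,
    HypoAux.deg_five G hG c b a d hbd hbc.symm hab.symm hda.symm hcd.symm hac.symm⟩
end

section
/- Let G be a hypohamiltonian graph with a 3-vertex-cut M = {u, v, w} such that M is not the neighbourhood of any vertex of G. Then at least one of u, v, w has degree at least 4 in G. -/
open SimpleGraph

set_option linter.unnecessarySimpa false
set_option linter.unusedVariables false

namespace HypoAux
variable {V : Type*} {G : SimpleGraph V}

/-- Connectivity within a vertex set `s`, expressed by walks of `G` staying in `s`. -/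
def Conn (G : SimpleGraph V) (s : Set V) (x y : V) : Prop :=
  ∃ p : G.Walk x y, ∀ z ∈ p.support, z ∈ s

lemma Conn.mem_left {s : Set V} {x y : V} (h : Conn G s x y) : x ∈ s := by
  obtain ⟨p, hp⟩ := h; exact hp x p.start_mem_support

lemma Conn.mem_right {s : Set V} {x y : V} (h : Conn G s x y) : y ∈ s := by
  obtain ⟨p, hp⟩ := h; exact hp y p.end_mem_support

lemma conn_refl {s : Set V} {x : V} (hx : x ∈ s) : Conn G s x x :=
  ⟨Walk.nil, by simpa using hx⟩

lemma Conn.symm {s : Set V} {x y : V} (h : Conn G s x y) : Conn G s y x := by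
  obtain ⟨p, hp⟩ := h
  exact ⟨p.reverse, by intro z hz; rw [Walk.support_reverse, List.mem_reverse] at hz; exact hp z hz⟩

lemma Conn.trans {s : Set V} {x y z : V} (h : Conn G s x y) (h' : Conn G s y z) :
    Conn G s x z := by
  obtain ⟨p, hp⟩ := h; obtain ⟨q, hq⟩ := h'
  refine ⟨p.append q, ?_⟩
  intro t ht
  rw [Walk.mem_support_append_iff] at ht
  exact ht.elim (hp t) (hq t)

lemma conn_of_adj {s : Set V} {x y : V} (h : G.Adj x y) (hx : x ∈ s) (hy : y ∈ s) :
    Conn G s x y :=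
  ⟨Walk.cons h Walk.nil, by intro z hz; simp at hz; rcases hz with rfl | rfl <;> assumption⟩

/-- every vertex on a witnessing walk is `Conn`-reachable. -/
lemma Conn.of_support [DecidableEq V] {s : Set V} {x y : V} (p : G.Walk x y)
    (hp : ∀ z ∈ p.support, z ∈ s) {t : V} (ht : t ∈ p.support) : Conn G s x t :=
  ⟨p.takeUntil t ht, fun z hz => hp z (p.support_takeUntil_subset ht hz)⟩

/-- transfer a `Conn` fact to a larger (on the relevant component) set. -/
lemma Conn.subset [DecidableEq V] {s t : Set V} {x y : V} (h : Conn G s x y)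
    (hsub : ∀ z, Conn G s x z → z ∈ t) : Conn G t x y := by
  obtain ⟨p, hp⟩ := h
  exact ⟨p, fun z hz => hsub z (Conn.of_support p hp hz)⟩

/-- reachability closure of a set closed under adjacency within `s`. -/
lemma walk_mem_of_closed {s W : Set V}
    (hcl : ∀ c ∈ W, ∀ d, G.Adj c d → d ∈ s → d ∈ W) :
    ∀ {x y : V} (p : G.Walk x y), (∀ z ∈ p.support, z ∈ s) → x ∈ W → y ∈ W
  | _, _, .nil, _, hx => hx
  | _, _, .cons hadj q, hp, hx =>
    walk_mem_of_closed hcl q (fun z hz => hp z (by simp [hz]))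
      (hcl _ hx _ hadj (hp _ (by simp)))

lemma Conn.mem_of_closed {s W : Set V} {x y : V}
    (hcl : ∀ c ∈ W, ∀ d, G.Adj c d → d ∈ s → d ∈ W) (hx : x ∈ W) (h : Conn G s x y) :
    y ∈ W := by
  obtain ⟨p, hp⟩ := h
  exact walk_mem_of_closed hcl p hp hx

lemma reachable_induce_aux {s : Set V} :
    ∀ {x y : V} (p : G.Walk x y), (∀ z ∈ p.support, z ∈ s) → ∀ (hx : x ∈ s) (hy : y ∈ s),
      (G.induce s).Reachable ⟨x, hx⟩ ⟨y, hy⟩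
  | _, _, .nil, _, _, _ => Reachable.refl _
  | _, _, .cons hadj q, hp, hx, hy =>
    (Adj.reachable (show (G.induce s).Adj ⟨_, hx⟩ ⟨_, hp _ (by simp)⟩ from hadj)).trans
      (reachable_induce_aux q (fun z hz => hp z (by simp [hz])) _ hy)

lemma reachable_induce {s : Set V} {x y : V} (h : Conn G s x y) :
    (G.induce s).Reachable ⟨x, h.mem_left⟩ ⟨y, h.mem_right⟩ := by
  obtain ⟨p, hp⟩ := h
  exact reachable_induce_aux p hp _ _



/-- A Hamiltonian cycle of an induced subgraph yields a cycle of `G` whose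
support is exactly the inducing set. -/
lemma exists_cycle_of_induce [DecidableEq V] {t : Set V}
    (h : ∃ (a : ↥t) (p : (G.induce t).Walk a a), p.IsHamiltonianCycle) :
    ∃ (a : V) (p : G.Walk a a), p.IsCycle ∧ ∀ z : V, z ∈ p.support ↔ z ∈ t := by
  classical
  obtain ⟨a, p, hp⟩ := h
  refine ⟨(a : V), p.map (Embedding.induce t).toHom, hp.isCycle.map Subtype.val_injective, ?_⟩
  intro z
  change z ∈ (p.map (Embedding.induce t).toHom).support ↔ z ∈ t
  rw [Walk.support_map, List.mem_map]
  constructor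
  · rintro ⟨z', _, rfl⟩; exact z'.2
  · intro hz
    exact ⟨⟨z, hz⟩, hp.mem_support ⟨z, hz⟩, rfl⟩

lemma end_mem_support_tail {x y : V} (R : G.Walk x y) (h : x ≠ y) :
    y ∈ R.support.tail := by
  cases R with
  | nil => exact absurd rfl h
  | cons hadj q => simpa using q.end_mem_support

lemma mem_support_tail_of_closed {a : V} {p : G.Walk a a} (hnil : p ≠ Walk.nil)
    {z : V} (hz : z ∈ p.support) : z ∈ p.support.tail := by
  cases p with
  | nil => exact absurd rfl hnil
  | cons hadj q =>
    simp only [Walk.support_cons, List.tail_cons]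
    simp only [Walk.support_cons, List.mem_cons] at hz
    rcases hz with rfl | h
    · exact q.end_mem_support
    · exact h

/-- Splitting a cycle at two distinct vertices of its support into two paths. -/
lemma cycle_split [DecidableEq V] {a : V} {p : G.Walk a a} (hp : p.IsCycle)
    {v w : V} (hv : v ∈ p.support) (hw : w ∈ p.support) (hvw : v ≠ w) :
    ∃ (P Q : G.Walk v w), P.IsPath ∧ Q.IsPath ∧
      (∀ z, z ∈ p.support ↔ (z ∈ P.support ∨ z ∈ Q.support)) ∧
      (∀ z, z ∈ P.support → z ∈ Q.support → z = v ∨ z = w) := by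
  classical
  set c := p.rotate v hv with hc_def
  have hc : c.IsCycle := hp.rotate hv
  have hrot : c.support.tail ~r p.support.tail := p.support_rotate v hv
  have hmemc : ∀ z, z ∈ c.support ↔ z ∈ p.support := by
    intro z
    have h1 : z ∈ c.support.tail ↔ z ∈ p.support.tail := hrot.mem_iff
    constructor
    · intro h
      exact List.mem_of_mem_tail (h1.mp (mem_support_tail_of_closed hc.ne_nil h))
    · intro h
      exact List.mem_of_mem_tail (h1.mpr (mem_support_tail_of_closed hp.ne_nil h))
  have hwc : w ∈ c.support := (hmemc w).mpr hw
  set P := c.takeUntil w hwc with hP_def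
  set R := c.dropUntil w hwc with hR_def
  have hspec : P.append R = c := c.take_spec hwc
  have hsupc : c.support = P.support ++ R.support.tail := by
    rw [← hspec, Walk.support_append]
  have htail : c.support.tail = P.support.tail ++ R.support.tail := by
    have h2 : P.support = v :: P.support.tail := P.support_eq_cons
    rw [h2, List.cons_append] at hsupc
    rw [hsupc, List.tail_cons]
  have hnd : c.support.tail.Nodup := hc.support_nodup
  rw [htail] at hnd
  have hndP : P.support.tail.Nodup := hnd.of_append_left
  have hndR : R.support.tail.Nodup := hnd.of_append_right
  have hdisj : ∀ z, z ∈ P.support.tail → z ∈ R.support.tail → False := by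
    intro z h1 h2
    exact (List.disjoint_of_nodup_append hnd) h1 h2
  have hvR : v ∈ R.support.tail := end_mem_support_tail R hvw.symm
  have hvnP : v ∉ P.support.tail := fun h => hdisj v h hvR
  have hPpath : P.IsPath := Walk.IsPath.mk' (by
    rw [P.support_eq_cons]
    exact List.nodup_cons.mpr ⟨hvnP, hndP⟩)
  -- w is in P.support.tail
  have hwP : w ∈ P.support := Walk.end_mem_support _
  have hwPt : w ∈ P.support.tail := by
    rw [P.support_eq_cons] at hwP
    rcases List.mem_cons.mp hwP with h | h
    · exact absurd h.symm hvw
    · exact h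
  have hwnR : w ∉ R.support.tail := fun h => hdisj w hwPt h
  have hRpath : R.IsPath := Walk.IsPath.mk' (by
    rw [R.support_eq_cons]
    exact List.nodup_cons.mpr ⟨hwnR, hndR⟩)
  refine ⟨P, R.reverse, hPpath, hRpath.reverse, ?_, ?_⟩
  · intro z
    rw [← hmemc z, hsupc, List.mem_append]
    constructor
    · rintro (h | h)
      · exact Or.inl h
      · refine Or.inr ?_
        rw [Walk.support_reverse, List.mem_reverse, R.support_eq_cons]
        exact List.mem_cons.mpr (Or.inr h)
    · rintro (h | h)
      · exact Or.inl h
      · rw [Walk.support_reverse, List.mem_reverse, R.support_eq_cons] at h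
        rcases List.mem_cons.mp h with rfl | h
        · exact Or.inl hwP
        · exact Or.inr h
  · intro z h1 h2
    rw [Walk.support_reverse, List.mem_reverse] at h2
    by_contra hne
    push_neg at hne
    obtain ⟨hzv, hzw⟩ := hne
    have h1' : z ∈ P.support.tail := by
      rw [P.support_eq_cons] at h1
      rcases List.mem_cons.mp h1 with rfl | h; · exact absurd rfl hzv
      · exact h
    have h2' : z ∈ R.support.tail := by
      rw [R.support_eq_cons] at h2
      rcases List.mem_cons.mp h2 with rfl | h; · exact absurd rfl hzw
      · exact h
    exact hdisj z h1' h2'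

/-- The start of a path with an interior vertex has a neighbour in the interior. -/
lemma exists_adj_interior {v w : V} {P : G.Walk v w} (hP : P.IsPath)
    {z0 : V} (hz0 : z0 ∈ P.support) (h0v : z0 ≠ v) (h0w : z0 ≠ w) :
    ∃ z, G.Adj v z ∧ z ∈ P.support ∧ z ≠ v ∧ z ≠ w := by
  cases P with
  | nil => simp at hz0; exact absurd hz0 h0v
  | cons hadj q =>
    rename_i b
    refine ⟨b, hadj, by simp, fun hbv => ?_, fun hbw => ?_⟩
    · rw [Walk.cons_isPath_iff] at hP
      exact hP.2 (hbv ▸ q.start_mem_support)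
    · subst hbw
      have : q = Walk.nil := (Walk.isPath_iff_eq_nil (p := q)).mp hP.of_cons
      subst this
      simp at hz0
      rcases hz0 with rfl | rfl
      · exact h0v rfl
      · exact h0w rfl

/-- `v` does not appear in `dropUntil z` of a path starting at `v`, when `z ≠ v`. -/
lemma start_not_mem_dropUntil_support [DecidableEq V] {v w : V} {P : G.Walk v w}
    (hP : P.IsPath) {z : V} (hz : z ∈ P.support) (hzv : z ≠ v) :
    v ∉ (P.dropUntil z hz).support := by
  have hnd : P.support.Nodup := hP.support_nodup
  have hsup : P.support = (P.takeUntil z hz).support ++ (P.dropUntil z hz).support.tail := by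
    have h' := congrArg Walk.support (P.take_spec hz)
    rw [Walk.support_append] at h'
    exact h'.symm
  rw [hsup] at hnd
  intro hmem
  rw [(P.dropUntil z hz).support_eq_cons] at hmem
  rcases List.mem_cons.mp hmem with h | h
  · exact hzv h.symm
  · exact (List.disjoint_of_nodup_append hnd)
      ((P.takeUntil z hz).start_mem_support) h

/-- `w` does not appear in `takeUntil z` of a path ending at `w`, when `z ≠ w`. -/
lemma end_not_mem_takeUntil_support [DecidableEq V] {v w : V} {P : G.Walk v w}
    (hP : P.IsPath) {z : V} (hz : z ∈ P.support) (hzw : z ≠ w) :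
    w ∉ (P.takeUntil z hz).support := by
  have hnd : P.support.Nodup := hP.support_nodup
  have hsup : P.support = (P.takeUntil z hz).support ++ (P.dropUntil z hz).support.tail := by
    have h' := congrArg Walk.support (P.take_spec hz)
    rw [Walk.support_append] at h'
    exact h'.symm
  rw [hsup] at hnd
  intro hmem
  have hwtail : w ∈ (P.dropUntil z hz).support.tail :=
    end_mem_support_tail _ hzw
  exact (List.disjoint_of_nodup_append hnd) hmem hwtail

/-- Two interior vertices of a path are connected avoiding the endpoints. -/
lemma interior_conn [DecidableEq V] {v w : V} {P : G.Walk v w} (hP : P.IsPath)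
    {z1 z2 : V} (h1 : z1 ∈ P.support) (h2 : z2 ∈ P.support)
    (h1v : z1 ≠ v) (h1w : z1 ≠ w) (h2v : z2 ≠ v) (h2w : z2 ≠ w) :
    ∃ q : G.Walk z1 z2, ∀ t ∈ q.support, t ∈ P.support ∧ t ≠ v ∧ t ≠ w := by
  by_cases hc : z2 ∈ (P.dropUntil z1 h1).support
  · refine ⟨(P.dropUntil z1 h1).takeUntil z2 hc, ?_⟩
    intro t ht
    have htP : t ∈ (P.dropUntil z1 h1).support :=
      (P.dropUntil z1 h1).support_takeUntil_subset hc ht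
    refine ⟨P.support_dropUntil_subset h1 htP, ?_, ?_⟩
    · rintro rfl; exact start_not_mem_dropUntil_support hP h1 h1v htP
    · rintro rfl
      exact end_not_mem_takeUntil_support (hP.dropUntil h1) hc h2w ht
  · -- z2 is in the takeUntil part
    have hz2take : z2 ∈ (P.takeUntil z1 h1).support := by
      have hsup : P.support = (P.takeUntil z1 h1).support ++ (P.dropUntil z1 h1).support.tail := by
        have h' := congrArg Walk.support (P.take_spec h1)
        rw [Walk.support_append] at h'
        exact h'.symm
      rw [hsup] at h2
      rcases List.mem_append.mp h2 with h | h
      · exact h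
      · exact absurd (List.mem_of_mem_tail h) hc
    set P' := P.takeUntil z1 h1 with hP'_def
    have hP' : P'.IsPath := hP.takeUntil h1
    have hwP' : w ∉ P'.support := end_not_mem_takeUntil_support hP h1 h1w
    refine ⟨(P'.dropUntil z2 hz2take).reverse, ?_⟩
    intro t ht
    rw [Walk.support_reverse, List.mem_reverse] at ht
    have htP' : t ∈ P'.support := P'.support_dropUntil_subset hz2take ht
    refine ⟨P.support_takeUntil_subset h1 htP', ?_, ?_⟩
    · rintro rfl; exact start_not_mem_dropUntil_support hP' hz2take h2v ht
    · rintro rfl; exact hwP' htP'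

/-- A path between `v` and `w` with an interior vertex does not use the edge `vw`. -/
lemma edge_not_mem_of_interior {v w : V} {P : G.Walk v w} (hP : P.IsPath) (hvw : v ≠ w)
    {z0 : V} (hz0 : z0 ∈ P.support) (h0v : z0 ≠ v) (h0w : z0 ≠ w) :
    s(v, w) ∉ P.edges := by
  cases P with
  | nil => simp
  | cons hadj q =>
    rename_i b
    simp only [Walk.edges_cons, List.mem_cons]
    rintro (he | he)
    · rw [Sym2.eq_iff] at he
      rcases he with ⟨-, rfl⟩ | ⟨rfl, hwv⟩
      · have : q = Walk.nil := (Walk.isPath_iff_eq_nil (p := q)).mp hP.of_cons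
        subst this
        simp at hz0
        rcases hz0 with rfl | rfl
        · exact h0v rfl
        · exact h0w rfl
      · exact hvw hwv.symm
    · have : v ∈ q.support := q.fst_mem_support_of_mem_edges he
      rw [Walk.cons_isPath_iff] at hP
      exact hP.2 this

/-- Splicing two internally disjoint paths with common distinct endpoints into a cycle. -/
lemma splice_isCycle {v w : V} {P Q : G.Walk v w} (hP : P.IsPath) (hQ : Q.IsPath)
    (hvw : v ≠ w)
    (hint : ∀ z, z ∈ P.support → z ∈ Q.support → z = v ∨ z = w)
    (hPn : ∃ z ∈ P.support, z ≠ v ∧ z ≠ w) (hQn : ∃ z ∈ Q.support, z ≠ v ∧ z ≠ w) :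
    (P.append Q.reverse).IsCycle := by
  obtain ⟨zP, hzP, hzPv, hzPw⟩ := hPn
  obtain ⟨zQ, hzQ, hzQv, hzQw⟩ := hQn
  have hPedge : s(v, w) ∉ P.edges := edge_not_mem_of_interior hP hvw hzP hzPv hzPw
  have hQedge : s(v, w) ∉ Q.edges := edge_not_mem_of_interior hQ hvw hzQ hzQv hzQw
  constructor
  · constructor
    · -- IsTrail : edges nodup
      constructor
      rw [Walk.edges_append, Walk.edges_reverse]
      rw [List.nodup_append]
      refine ⟨hP.isTrail.edges_nodup, List.nodup_reverse.mpr hQ.isTrail.edges_nodup, ?_⟩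
      intro e heP e' heQ he
      subst he
      rw [List.mem_reverse] at heQ
      induction e with
      | h c d =>
        have hcP : c ∈ P.support := P.fst_mem_support_of_mem_edges heP
        have hdP : d ∈ P.support := P.snd_mem_support_of_mem_edges heP
        have hcQ : c ∈ Q.support := Q.fst_mem_support_of_mem_edges heQ
        have hdQ : d ∈ Q.support := Q.snd_mem_support_of_mem_edges heQ
        have hcd : c ≠ d := (Walk.adj_of_mem_edges Q heQ).ne
        rcases hint c hcP hcQ with rfl | rfl <;> rcases hint d hdP hdQ with rfl | rfl
        · exact hcd rfl
        · exact hPedge heP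
        · exact hPedge (Sym2.eq_swap ▸ heP)
        · exact hcd rfl
    · -- ne_nil
      intro h
      have : P.length + Q.reverse.length = 0 := by
        rw [← Walk.length_append, h]; rfl
      have hPl : P.length = 0 := by omega
      exact hvw (Walk.eq_of_length_eq_zero hPl)
  · -- support tail nodup
    have hsup : (P.append Q.reverse).support.tail
        = P.support.tail ++ Q.reverse.support.tail := by
      have h' : (P.append Q.reverse).support = P.support ++ Q.reverse.support.tail :=
        Walk.support_append P Q.reverse
      rw [h', P.support_eq_cons, List.cons_append, List.tail_cons]
      rfl
    rw [hsup, List.nodup_append]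
    have hQrev : Q.reverse.IsPath := hQ.reverse
    refine ⟨(P.support_eq_cons ▸ hP.support_nodup).of_cons, ?_, ?_⟩
    · exact (Q.reverse.support_eq_cons ▸ hQrev.support_nodup).of_cons
    · intro z hz1 z' hz2 hzz
      subst hzz
      have hzP' : z ∈ P.support := List.mem_of_mem_tail hz1
      have hzQ' : z ∈ Q.support := by
        have := List.mem_of_mem_tail hz2
        rw [Walk.support_reverse, List.mem_reverse] at this
        exact this
      rcases hint z hzP' hzQ' with rfl | rfl
      · -- v in P.support.tail contradicts nodup of P.support
        have := P.support_eq_cons ▸ hP.support_nodup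
        exact (List.nodup_cons.mp this).1 hz1
      · -- w in Q.reverse.support.tail contradicts nodup
        have := Q.reverse.support_eq_cons ▸ hQrev.support_nodup
        exact (List.nodup_cons.mp this).1 hz2

lemma comp_match_aux {IP IQ A B : Set V} {r : V → V → Prop}
    (hP : ∀ x ∈ IP, ∀ y ∈ IP, r x y) (hQ : ∀ x ∈ IQ, ∀ y ∈ IQ, r x y)
    (hAc : ∀ x ∈ A, ∀ y, r x y → y ∈ A) (hBc : ∀ x ∈ B, ∀ y, r x y → y ∈ B)
    (hU : ∀ z, (z ∈ IP ∨ z ∈ IQ) ↔ (z ∈ A ∨ z ∈ B))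
    (hIdisj : ∀ z, z ∈ IP → z ∈ IQ → False)
    (hABdisj : ∀ z, z ∈ A → z ∈ B → False)
    (hB : B.Nonempty) {a : V} (haA : a ∈ A) (haP : a ∈ IP) :
    IP = A ∧ IQ = B := by
  have hIPA : ∀ t ∈ IP, t ∈ A := fun t ht => hAc a haA t (hP a haP t ht)
  obtain ⟨b, hbB⟩ := hB
  have hbIQ : b ∈ IQ := by
    rcases (hU b).mpr (Or.inr hbB) with h | h
    · exact absurd hbB (fun h2 => hABdisj b (hIPA b h) h2)
    · exact h
  have hIQB : ∀ t ∈ IQ, t ∈ B := fun t ht => hBc b hbB t (hQ b hbIQ t ht)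
  constructor
  · ext t
    refine ⟨hIPA t, fun htA => ?_⟩
    rcases (hU t).mpr (Or.inl htA) with h | h
    · exact h
    · exact absurd (hIQB t h) (fun h2 => hABdisj t htA h2)
  · ext t
    refine ⟨hIQB t, fun htB => ?_⟩
    rcases (hU t).mpr (Or.inr htB) with h | h
    · exact absurd (hIPA t h) (fun h2 => hABdisj t h2 htB)
    · exact h

lemma comp_match {IP IQ A B : Set V} {r : V → V → Prop}
    (hP : ∀ x ∈ IP, ∀ y ∈ IP, r x y) (hQ : ∀ x ∈ IQ, ∀ y ∈ IQ, r x y)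
    (hAc : ∀ x ∈ A, ∀ y, r x y → y ∈ A) (hBc : ∀ x ∈ B, ∀ y, r x y → y ∈ B)
    (hU : ∀ z, (z ∈ IP ∨ z ∈ IQ) ↔ (z ∈ A ∨ z ∈ B))
    (hIdisj : ∀ z, z ∈ IP → z ∈ IQ → False)
    (hABdisj : ∀ z, z ∈ A → z ∈ B → False)
    (hA : A.Nonempty) (hB : B.Nonempty) :
    (IP = A ∧ IQ = B) ∨ (IP = B ∧ IQ = A) := by
  obtain ⟨a, haA⟩ := hA
  rcases (hU a).mpr (Or.inl haA) with haP | haQ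
  · exact Or.inl (comp_match_aux hP hQ hAc hBc hU hIdisj hABdisj hB haA haP)
  · refine Or.inr ?_
    have := comp_match_aux hQ hP hAc hBc
      (fun z => by rw [or_comm]; exact hU z)
      (fun z h1 h2 => hIdisj z h2 h1)
      hABdisj hB haA haQ
    exact ⟨this.2, this.1⟩

/-- The two arcs of a Hamiltonian-type cycle between the two vertices `x1 x2` span
exactly the two "components" `A` and `B`. -/
lemma arcs [DecidableEq V] {T s A B : Set V} {x1 x2 : V} (hx12 : x1 ≠ x2)
    {a : V} {p : G.Walk a a} (hp : p.IsCycle) (hsup : ∀ z, z ∈ p.support ↔ z ∈ T)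
    (hx1T : x1 ∈ T) (hx2T : x2 ∈ T)
    (hs : ∀ z, z ∈ s ↔ (z ∈ T ∧ z ≠ x1 ∧ z ≠ x2))
    (hU : ∀ z, z ∈ s ↔ (z ∈ A ∨ z ∈ B))
    (hABdisj : ∀ z, z ∈ A → z ∈ B → False)
    (hA : A.Nonempty) (hB : B.Nonempty)
    (hAc : ∀ x ∈ A, ∀ y, Conn G s x y → y ∈ A)
    (hBc : ∀ x ∈ B, ∀ y, Conn G s x y → y ∈ B) :
    ∃ P Q : G.Walk x1 x2, P.IsPath ∧ Q.IsPath ∧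
      (∀ z, z ∈ P.support ↔ (z ∈ A ∨ z = x1 ∨ z = x2)) ∧
      (∀ z, z ∈ Q.support ↔ (z ∈ B ∨ z = x1 ∨ z = x2)) := by
  obtain ⟨P, Q, hPp, hQp, hun, hin⟩ :=
    cycle_split hp ((hsup x1).mpr hx1T) ((hsup x2).mpr hx2T) hx12
  have hPT : ∀ z ∈ P.support, z ∈ T :=
    fun z hz => (hsup z).mp ((hun z).mpr (Or.inl hz))
  have hQT : ∀ z ∈ Q.support, z ∈ T :=
    fun z hz => (hsup z).mp ((hun z).mpr (Or.inr hz))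
  have key : ∀ (R : G.Walk x1 x2), R.IsPath → (∀ z ∈ R.support, z ∈ T) →
      ∀ z1, (z1 ∈ R.support ∧ z1 ≠ x1 ∧ z1 ≠ x2) →
      ∀ z2, (z2 ∈ R.support ∧ z2 ≠ x1 ∧ z2 ≠ x2) → Conn G s z1 z2 := by
    rintro R hR hRT z1 ⟨hz1, hz1a, hz1b⟩ z2 ⟨hz2, hz2a, hz2b⟩
    obtain ⟨q, hq⟩ := interior_conn hR hz1 hz2 hz1a hz1b hz2a hz2b
    exact ⟨q, fun t ht => (hs t).mpr ⟨hRT t (hq t ht).1, (hq t ht).2.1, (hq t ht).2.2⟩⟩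
  have hmatch := comp_match (r := Conn G s)
    (IP := {z | z ∈ P.support ∧ z ≠ x1 ∧ z ≠ x2})
    (IQ := {z | z ∈ Q.support ∧ z ≠ x1 ∧ z ≠ x2})
    (fun x hx y hy => key P hPp hPT x hx y hy)
    (fun x hx y hy => key Q hQp hQT x hx y hy)
    hAc hBc
    (by
      intro z
      rw [← hU z]
      constructor
      · rintro (⟨h1, h2, h3⟩ | ⟨h1, h2, h3⟩)
        · exact (hs z).mpr ⟨hPT z h1, h2, h3⟩
        · exact (hs z).mpr ⟨hQT z h1, h2, h3⟩
      · intro hz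
        obtain ⟨hzT, hz1, hz2⟩ := (hs z).mp hz
        rcases (hun z).mp ((hsup z).mpr hzT) with h | h
        · exact Or.inl ⟨h, hz1, hz2⟩
        · exact Or.inr ⟨h, hz1, hz2⟩)
    (by
      rintro z ⟨h1, h2, h3⟩ ⟨h4, -, -⟩
      rcases hin z h1 h4 with rfl | rfl
      · exact h2 rfl
      · exact h3 rfl)
    hABdisj hA hB
  have final : ∀ (R : G.Walk x1 x2) (C : Set V),
      {z | z ∈ R.support ∧ z ≠ x1 ∧ z ≠ x2} = C →
      ∀ z, z ∈ R.support ↔ (z ∈ C ∨ z = x1 ∨ z = x2) := by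
    intro R C hC z
    constructor
    · intro hz
      by_cases h1 : z = x1
      · exact Or.inr (Or.inl h1)
      by_cases h2 : z = x2
      · exact Or.inr (Or.inr h2)
      · exact Or.inl (hC ▸ ⟨hz, h1, h2⟩)
    · rintro (hz | rfl | rfl)
      · rw [← hC] at hz; exact hz.1
      · exact R.start_mem_support
      · exact R.end_mem_support
  rcases hmatch with ⟨h1, h2⟩ | ⟨h1, h2⟩
  · exact ⟨P, Q, hPp, hQp, final P A h1, final Q B h2⟩
  · exact ⟨Q, P, hQp, hPp, final Q A h2, final P B h1⟩

/-- A vertex of degree at most 3 with neighbours in two disjoint sets has a unique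
neighbour in one of them. -/
lemma unique_side [Fintype V] [DecidableEq V] [DecidableRel G.Adj] {x : V} {A B : Set V}
    (hdeg : G.degree x ≤ 3)
    (hA : ∃ z ∈ A, G.Adj x z) (hB : ∃ z ∈ B, G.Adj x z)
    (hABdisj : ∀ z, z ∈ A → z ∈ B → False) :
    (∃ y, G.Adj x y ∧ y ∈ A ∧ ∀ z, G.Adj x z → z ∈ A → z = y) ∨
    (∃ y, G.Adj x y ∧ y ∈ B ∧ ∀ z, G.Adj x z → z ∈ B → z = y) := by
  obtain ⟨a1, ha1A, ha1⟩ := hA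
  obtain ⟨b1, hb1B, hb1⟩ := hB
  by_cases hA1 : ∀ z, G.Adj x z → z ∈ A → z = a1
  · exact Or.inl ⟨a1, ha1, ha1A, hA1⟩
  by_cases hB1 : ∀ z, G.Adj x z → z ∈ B → z = b1
  · exact Or.inr ⟨b1, hb1, hb1B, hB1⟩
  exfalso
  push_neg at hA1 hB1
  obtain ⟨a2, ha2, ha2A, ha2ne⟩ := hA1
  obtain ⟨b2, hb2, hb2B, hb2ne⟩ := hB1
  have hab : ∀ {c d : V}, c ∈ A → d ∈ B → c ≠ d := by
    rintro c d hc hd rfl; exact hABdisj c hc hd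
  have hsub : ({a1, a2, b1, b2} : Finset V) ⊆ G.neighborFinset x := by
    intro z hz
    simp only [Finset.mem_insert, Finset.mem_singleton] at hz
    rw [mem_neighborFinset]
    rcases hz with rfl | rfl | rfl | rfl <;> assumption
  have hcard : ({a1, a2, b1, b2} : Finset V).card = 4 := by
    rw [Finset.card_insert_of_notMem (by
      simp only [Finset.mem_insert, Finset.mem_singleton]
      push_neg
      exact ⟨fun h => ha2ne h.symm, hab ha1A hb1B, hab ha1A hb2B⟩),
      Finset.card_insert_of_notMem (by
      simp only [Finset.mem_insert, Finset.mem_singleton]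
      push_neg
      exact ⟨hab ha2A hb1B, hab ha2A hb2B⟩),
      Finset.card_insert_of_notMem (by
      simp only [Finset.mem_singleton]
      exact fun h => hb2ne h.symm),
      Finset.card_singleton]
  have : 4 ≤ G.degree x := by
    rw [← hcard]
    exact Finset.card_le_card hsub
  omega

/-- A cycle covering all vertices gives a Hamiltonian cycle. -/
lemma isHamiltonianCycle_of_cover [DecidableEq V] {x : V} {c : G.Walk x x}
    (hc : c.IsCycle) (hcov : ∀ z, z ∈ c.support) : c.IsHamiltonianCycle := by
  rw [Walk.isHamiltonianCycle_iff_isCycle_and_support_count_tail_eq_one]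
  refine ⟨hc, fun z => ?_⟩
  exact List.count_eq_one_of_mem hc.support_nodup
    (mem_support_tail_of_closed hc.ne_nil (hcov z))

/-- both endpoints of an arc spanning `C` have neighbours in `C`. -/
lemma side_nbrs {x1 x2 : V} {P : G.Walk x1 x2} (hP : P.IsPath) {C : Set V}
    (hPs : ∀ z, z ∈ P.support ↔ (z ∈ C ∨ z = x1 ∨ z = x2))
    (hCne : C.Nonempty) (hCends : ∀ z ∈ C, z ≠ x1 ∧ z ≠ x2) :
    (∃ z ∈ C, G.Adj x1 z) ∧ (∃ z ∈ C, G.Adj x2 z) := by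
  obtain ⟨c0, hc0⟩ := hCne
  have hc0s : c0 ∈ P.support := (hPs c0).mpr (Or.inl hc0)
  obtain ⟨hc01, hc02⟩ := hCends c0 hc0
  constructor
  · obtain ⟨z, hadj, hzs, hz1, hz2⟩ := exists_adj_interior hP hc0s hc01 hc02
    refine ⟨z, ?_, hadj⟩
    rcases (hPs z).mp hzs with h | h | h
    · exact h
    · exact absurd h hz1
    · exact absurd h hz2
  · have hc0r : c0 ∈ P.reverse.support := by
      rw [Walk.support_reverse, List.mem_reverse]; exact hc0s
    obtain ⟨z, hadj, hzs, hz2, hz1⟩ := exists_adj_interior hP.reverse hc0r hc02 hc01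
    rw [Walk.support_reverse, List.mem_reverse] at hzs
    refine ⟨z, ?_, hadj⟩
    rcases (hPs z).mp hzs with h | h | h
    · exact h
    · exact absurd h hz1
    · exact absurd h hz2

lemma core [Fintype V] [DecidableEq V]
    (hnh : ¬ IsHamiltonianGraph G)
    (hdel : ∀ t : V, IsHamiltonianGraph (G.induce ({t}ᶜ : Set V)))
    {m m1 m2 : V} (h01 : m ≠ m1) (h02 : m ≠ m2) (h12 : m1 ≠ m2)
    {sM : Set V} (hsM : ∀ z, z ∈ sM ↔ (z ≠ m ∧ z ≠ m1 ∧ z ≠ m2))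
    {Y Z : Set V}
    (hYZdisj : ∀ z, z ∈ Y → z ∈ Z → False)
    (huniv : ∀ z : V, z ∈ Y ∨ z ∈ Z ∨ z = m ∨ z = m1 ∨ z = m2)
    (hYM : ∀ z ∈ Y, z ∈ sM) (hZM : ∀ z ∈ Z, z ∈ sM)
    (hYc : ∀ x ∈ Y, ∀ t, Conn G sM x t → t ∈ Y)
    (hZc : ∀ x ∈ Z, ∀ t, Conn G sM x t → t ∈ Z)
    (hYp : ∀ x ∈ Y, ∀ y ∈ Y, Conn G sM x y)
    (hZp : ∀ x ∈ Z, ∀ y ∈ Z, Conn G sM x y)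
    (hZne : Z.Nonempty)
    {y : V} (hyY : y ∈ Y) (hmy : G.Adj m y) (hyuniq : ∀ z, G.Adj m z → z ∈ Y → z = y)
    (hmZ : ∃ z ∈ Z, G.Adj m z)
    (hm1Y : ∃ z ∈ Y, G.Adj m1 z) (hm2Y : ∃ z ∈ Y, G.Adj m2 z)
    (hnbhd : ¬ ∃ x : V, G.neighborSet x = {m, m1, m2}) : False := by
  obtain ⟨hym, hym1, hym2⟩ := (hsM y).mp (hYM y hyY)
  by_cases hY1 : ∀ z ∈ Y, z = y
  · -- Y is a singleton; its element has neighbourhood {m, m1, m2}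
    apply hnbhd
    refine ⟨y, ?_⟩
    ext t
    simp only [mem_neighborSet, Set.mem_insert_iff, Set.mem_singleton_iff]
    constructor
    · intro hadj
      by_contra ht
      push_neg at ht
      obtain ⟨ht0, ht1, ht2⟩ := ht
      have htM : t ∈ sM := (hsM t).mpr ⟨ht0, ht1, ht2⟩
      have : t ∈ Y := hYc y hyY t (conn_of_adj hadj (hYM y hyY) htM)
      have := hY1 t this
      subst this
      exact hadj.ne rfl
    · rintro (rfl | rfl | rfl)
      · exact hmy.symm
      · obtain ⟨z, hzY, hz⟩ := hm1Y
        have := hY1 z hzY; subst this; exact hz.symm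
      · obtain ⟨z, hzY, hz⟩ := hm2Y
        have := hY1 z hzY; subst this; exact hz.symm
  · push_neg at hY1
    obtain ⟨y2, hy2Y, hy2ne⟩ := hY1
    -- Hamiltonian cycle of G - y
    obtain ⟨aq, q, hq, hqsup⟩ := exists_cycle_of_induce (hdel y)
    have hqsup' : ∀ z, z ∈ q.support ↔ z ∈ {z : V | z ≠ y} := by
      intro z; rw [hqsup z]; simp
    set W : Set V := {z | z ∈ Z ∨ z = m} with hW_def
    set W2 : Set V := {z | z ∈ Y ∧ z ≠ y} with hW2_def
    set s' : Set V := {z : V | z ≠ y ∧ z ≠ m1 ∧ z ≠ m2} with hs'_def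
    -- adjacency closures
    have hWadj : ∀ c ∈ W, ∀ d, G.Adj c d → d ∈ s' → d ∈ W := by
      rintro c (hcZ | rfl) d hadj ⟨hdy, hd1, hd2⟩
      · by_cases hdm : d = m
        · exact Or.inr hdm
        · have hdM : d ∈ sM := (hsM d).mpr ⟨hdm, hd1, hd2⟩
          exact Or.inl (hZc c hcZ d (conn_of_adj hadj (hZM c hcZ) hdM))
      · rcases huniv d with hdY | hdZ | rfl | rfl | rfl
        · exact absurd (hyuniq d hadj hdY) hdy
        · exact Or.inl hdZ
        · exact Or.inr rfl
        · exact absurd rfl hd1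
        · exact absurd rfl hd2
    have hW2adj : ∀ c ∈ W2, ∀ d, G.Adj c d → d ∈ s' → d ∈ W2 := by
      rintro c ⟨hcY, hcy⟩ d hadj ⟨hdy, hd1, hd2⟩
      by_cases hdm : d = m
      · subst hdm
        exact absurd (hyuniq c hadj.symm hcY) hcy
      · have hdM : d ∈ sM := (hsM d).mpr ⟨hdm, hd1, hd2⟩
        exact ⟨hYc c hcY d (conn_of_adj hadj (hYM c hcY) hdM), hdy⟩
    have hWc : ∀ c ∈ W, ∀ t, Conn G s' c t → t ∈ W :=
      fun c hc t hconn => Conn.mem_of_closed hWadj hc hconn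
    have hW2c : ∀ c ∈ W2, ∀ t, Conn G s' c t → t ∈ W2 :=
      fun c hc t hconn => Conn.mem_of_closed hW2adj hc hconn
    have hm1y : m1 ≠ y := fun h => hym1 h.symm
    have hm2y : m2 ≠ y := fun h => hym2 h.symm
    -- arcs of the cycle avoiding y, at m1 m2, spanning W and W2
    obtain ⟨P', Q', hP'p, hQ'p, hP's, hQ's⟩ :=
      arcs (A := W) (B := W2) (s := s') h12 hq hqsup' hm1y hm2y
        (fun z => Iff.rfl)
        (by
          intro z
          constructor
          · rintro ⟨hzy, hz1, hz2⟩
            rcases huniv z with h | h | rfl | rfl | rfl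
            · exact Or.inr ⟨h, hzy⟩
            · exact Or.inl (Or.inl h)
            · exact Or.inl (Or.inr rfl)
            · exact absurd rfl hz1
            · exact absurd rfl hz2
          · rintro ((hz | rfl) | hzz)
            · obtain ⟨-, h1, h2⟩ := (hsM z).mp (hZM z hz)
              refine ⟨fun h => hYZdisj y hyY (h ▸ hz), h1, h2⟩
            · exact ⟨fun h => hym (h.symm), fun h => h01 h, fun h => h02 h⟩
            · obtain ⟨hz, hzy⟩ := hzz
              obtain ⟨-, h1, h2⟩ := (hsM z).mp (hYM z hz)
              exact ⟨hzy, h1, h2⟩)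
        (by
          rintro z (hz | rfl) ⟨hzY, hzy⟩
          · exact hYZdisj z hzY hz
          · exact ((hsM z).mp (hYM z hzY)).1 rfl)
        ⟨m, Or.inr rfl⟩ ⟨y2, hy2Y, hy2ne⟩ hWc hW2c
    -- arcs of the cycle avoiding m, at m1 m2, spanning Y and Z
    obtain ⟨am, pm, hpm, hpmsup⟩ := exists_cycle_of_induce (hdel m)
    have hpmsup' : ∀ z, z ∈ pm.support ↔ z ∈ {z : V | z ≠ m} := by
      intro z; rw [hpmsup z]; simp
    obtain ⟨P'', Q'', hP''p, hQ''p, hP''s, hQ''s⟩ :=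
      arcs (A := Y) (B := Z) (s := sM) h12 hpm hpmsup' h01.symm h02.symm
        (fun z => by rw [hsM z]; exact Iff.rfl)
        (by
          intro z
          rw [hsM z]
          constructor
          · rintro ⟨hz0, hz1, hz2⟩
            rcases huniv z with h | h | rfl | rfl | rfl
            · exact Or.inl h
            · exact Or.inr h
            · exact absurd rfl hz0
            · exact absurd rfl hz1
            · exact absurd rfl hz2
          · rintro (hz | hz)
            · exact (hsM z).mp (hYM z hz)
            · exact (hsM z).mp (hZM z hz))
        hYZdisj ⟨y, hyY⟩ hZne hYc hZc
    -- splice P' (spanning W ∪ {m1,m2}) with P'' (spanning Y ∪ {m1,m2})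
    have hint : ∀ z, z ∈ P'.support → z ∈ P''.support → z = m1 ∨ z = m2 := by
      intro z h1 h2
      rcases (hP's z).mp h1 with (hz | hzm) | h | h
      · rcases (hP''s z).mp h2 with hzY | h | h
        · exact absurd hzY (fun h => hYZdisj z h hz)
        · exact Or.inl h
        · exact Or.inr h
      · rcases (hP''s z).mp h2 with hzY | h | h
        · exact absurd hzm ((hsM z).mp (hYM z hzY)).1
        · exact Or.inl h
        · exact Or.inr h
      · exact Or.inl h
      · exact Or.inr h
    have hcyc : (P'.append P''.reverse).IsCycle :=
      splice_isCycle hP'p hP''p h12 hint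
        ⟨m, (hP's m).mpr (Or.inl (Or.inr rfl)), h01, h02⟩
        ⟨y, (hP''s y).mpr (Or.inl hyY), fun h => hym1 h, fun h => hym2 h⟩
    have hcov : ∀ z, z ∈ (P'.append P''.reverse).support := by
      intro z
      rw [Walk.mem_support_append_iff]
      rcases huniv z with h | h | rfl | rfl | rfl
      · refine Or.inr ?_
        rw [Walk.support_reverse, List.mem_reverse]
        exact (hP''s z).mpr (Or.inl h)
      · exact Or.inl ((hP's z).mpr (Or.inl (Or.inl h)))
      · exact Or.inl ((hP's z).mpr (Or.inl (Or.inr rfl)))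
      · exact Or.inl ((hP's z).mpr (Or.inr (Or.inl rfl)))
      · exact Or.inl ((hP's z).mpr (Or.inr (Or.inr rfl)))
    exact hnh ⟨m1, P'.append P''.reverse, isHamiltonianCycle_of_cover hcyc hcov⟩

end HypoAux

open HypoAux

theorem hypohamiltonian_three_cut_degree {α : Type*} [Fintype α] [DecidableEq α]
    (G : SimpleGraph α) [DecidableRel G.Adj] (hG : Hypohamiltonian G)
    (u v w : α) (huv : u ≠ v) (hvw : v ≠ w) (huw : u ≠ w)
    (hcut : ¬ (G.induce ({u, v, w}ᶜ : Set α)).Connected)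
    (hnbhd : ¬ ∃ x : α, G.neighborSet x = {u, v, w}) :
    4 ≤ G.degree u ∨ 4 ≤ G.degree v ∨ 4 ≤ G.degree w := by
  by_contra hcon
  push_neg at hcon
  obtain ⟨hd1, hd2, hd3⟩ := hcon
  have hdu : G.degree u ≤ 3 := by omega
  obtain ⟨hne, hnh, hdel⟩ := hG
  set sMc : Set α := ({u, v, w}ᶜ : Set α) with hsMc_def
  have hsM : ∀ z, z ∈ sMc ↔ (z ≠ u ∧ z ≠ v ∧ z ≠ w) := by
    intro z
    simp [hsMc_def, not_or]
  by_cases hMc : ∃ z, z ∈ sMc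
  swap
  · -- the complement of the cut is empty: impossible since G - u has a cycle
    push_neg at hMc
    obtain ⟨a0, p0, hp0, hsup0⟩ := exists_cycle_of_induce (hdel u)
    have hlen : 3 ≤ p0.length := hp0.three_le_length
    have htnd : p0.support.tail.Nodup := hp0.support_nodup
    have hsubset : p0.support.tail.toFinset ⊆ ({v, w} : Finset α) := by
      intro z hz
      rw [List.mem_toFinset] at hz
      have hzs : z ∈ p0.support := List.mem_of_mem_tail hz
      have hzu : z ≠ u := by
        have := (hsup0 z).mp hzs
        simpa using this
      simp only [Finset.mem_insert, Finset.mem_singleton]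
      by_contra hc
      push_neg at hc
      exact (hMc z) ((hsM z).mpr ⟨hzu, hc.1, hc.2⟩)
    have hcard1 : p0.support.tail.toFinset.card = p0.support.tail.length :=
      List.toFinset_card_of_nodup htnd
    have hcard2 : p0.support.tail.toFinset.card ≤ 2 :=
      le_trans (Finset.card_le_card hsubset)
        (le_trans (Finset.card_insert_le _ _) (by simp))
    have hlsup : p0.support.length = p0.length + 1 := p0.length_support
    have hltail : p0.support.tail.length = p0.support.length - 1 := List.length_tail
    omega
  · obtain ⟨c0, hc0⟩ := hMc
    have hnpre : ¬(G.induce sMc).Preconnected := by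
      intro h
      exact hcut ((connected_iff _).mpr ⟨h, ⟨⟨c0, hc0⟩⟩⟩)
    unfold SimpleGraph.Preconnected at hnpre
    push_neg at hnpre
    obtain ⟨x0, y0, hnr⟩ := hnpre
    have hnConn : ¬ Conn G sMc (x0 : α) (y0 : α) := by
      intro h
      apply hnr
      have h2 := reachable_induce h
      have e1 : (⟨(x0 : α), h.mem_left⟩ : ↥sMc) = x0 := Subtype.ext rfl
      have e2 : (⟨(y0 : α), h.mem_right⟩ : ↥sMc) = y0 := Subtype.ext rfl
      rwa [e1, e2] at h2
    set A : Set α := {z | Conn G sMc (x0 : α) z} with hA_def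
    set B : Set α := {z | z ∈ sMc ∧ ¬ Conn G sMc (x0 : α) z} with hB_def
    have haA : (x0 : α) ∈ A := conn_refl x0.2
    have hbB : (y0 : α) ∈ B := ⟨y0.2, hnConn⟩
    have hAs : ∀ z ∈ A, z ∈ sMc := fun z hz => Conn.mem_right hz
    have hBs : ∀ z ∈ B, z ∈ sMc := fun z hz => hz.1
    have hAc : ∀ x ∈ A, ∀ t, Conn G sMc x t → t ∈ A := fun x hx t ht => Conn.trans hx ht
    have hBc : ∀ x ∈ B, ∀ t, Conn G sMc x t → t ∈ B :=
      fun x hx t ht => ⟨ht.mem_right, fun hat => hx.2 (hat.trans ht.symm)⟩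
    have hABd : ∀ z, z ∈ A → z ∈ B → False := fun z h1 h2 => h2.2 h1
    have hU : ∀ z, z ∈ sMc ↔ (z ∈ A ∨ z ∈ B) := by
      intro z
      constructor
      · intro hz
        by_cases h : Conn G sMc (x0 : α) z
        · exact Or.inl h
        · exact Or.inr ⟨hz, h⟩
      · rintro (h | h)
        · exact Conn.mem_right h
        · exact h.1
    have hAp : ∀ x ∈ A, ∀ y ∈ A, Conn G sMc x y := fun x hx y hy => (Conn.symm hx).trans hy
    have huniv : ∀ z : α, z ∈ A ∨ z ∈ B ∨ z = u ∨ z = v ∨ z = w := by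
      intro z
      by_cases hz : z ∈ sMc
      · rcases (hU z).mp hz with h | h
        · exact Or.inl h
        · exact Or.inr (Or.inl h)
      · have : ¬(z ≠ u ∧ z ≠ v ∧ z ≠ w) := fun hh => hz ((hsM z).mpr hh)
        push_neg at this
        by_cases h1 : z = u
        · exact Or.inr (Or.inr (Or.inl h1))
        by_cases h2 : z = v
        · exact Or.inr (Or.inr (Or.inr (Or.inl h2)))
        · exact Or.inr (Or.inr (Or.inr (Or.inr (this h1 h2))))
    -- arcs of the cycle avoiding u, at v w
    obtain ⟨aU, pu, hpu, hpusup⟩ := exists_cycle_of_induce (hdel u)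
    have hpusup' : ∀ z, z ∈ pu.support ↔ z ∈ {z : α | z ≠ u} := by
      intro z; rw [hpusup z]; simp
    obtain ⟨Pu, Qu, hPup, hQup, hPus, hQus⟩ :=
      arcs (A := A) (B := B) (s := sMc) hvw hpu hpusup' huv.symm huw.symm
        (fun z => by rw [hsM z]; exact Iff.rfl)
        hU hABd ⟨_, haA⟩ ⟨_, hbB⟩ hAc hBc
    -- B is pairwise connected, since it is spanned by the path Qu
    have hBp : ∀ x ∈ B, ∀ y ∈ B, Conn G sMc x y := by
      intro x hx y hy
      rcases eq_or_ne x y with rfl | hxy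
      · exact conn_refl (hBs x hx)
      · obtain ⟨hxu, hxv, hxw⟩ := (hsM x).mp (hBs x hx)
        obtain ⟨hyu, hyv, hyw⟩ := (hsM y).mp (hBs y hy)
        obtain ⟨q, hq⟩ := interior_conn hQup ((hQus x).mpr (Or.inl hx))
          ((hQus y).mpr (Or.inl hy)) hxv hxw hyv hyw
        refine ⟨q, fun t ht => ?_⟩
        obtain ⟨hts, ht1, ht2⟩ := hq t ht
        rcases (hQus t).mp hts with h | h | h
        · exact hBs t h
        · exact absurd h ht1
        · exact absurd h ht2
    -- arcs of the cycle avoiding v, at u w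
    obtain ⟨aV, pv, hpv, hpvsup⟩ := exists_cycle_of_induce (hdel v)
    have hpvsup' : ∀ z, z ∈ pv.support ↔ z ∈ {z : α | z ≠ v} := by
      intro z; rw [hpvsup z]; simp
    obtain ⟨Pv, Qv, hPvp, hQvp, hPvs, hQvs⟩ :=
      arcs (A := A) (B := B) (s := sMc) huw hpv hpvsup' huv hvw.symm
        (fun z => by
          rw [hsM z]
          exact ⟨fun ⟨h1, h2, h3⟩ => ⟨h2, h1, h3⟩, fun ⟨h2, h1, h3⟩ => ⟨h1, h2, h3⟩⟩)
        hU hABd ⟨_, haA⟩ ⟨_, hbB⟩ hAc hBc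
    -- neighbours of u, v, w in A and B
    have hendsA_vw : ∀ z ∈ A, z ≠ v ∧ z ≠ w := by
      intro z hz; obtain ⟨-, h2, h3⟩ := (hsM z).mp (hAs z hz); exact ⟨h2, h3⟩
    have hendsB_vw : ∀ z ∈ B, z ≠ v ∧ z ≠ w := by
      intro z hz; obtain ⟨-, h2, h3⟩ := (hsM z).mp (hBs z hz); exact ⟨h2, h3⟩
    have hendsA_uw : ∀ z ∈ A, z ≠ u ∧ z ≠ w := by
      intro z hz; obtain ⟨h1, -, h3⟩ := (hsM z).mp (hAs z hz); exact ⟨h1, h3⟩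
    have hendsB_uw : ∀ z ∈ B, z ≠ u ∧ z ≠ w := by
      intro z hz; obtain ⟨h1, -, h3⟩ := (hsM z).mp (hBs z hz); exact ⟨h1, h3⟩
    obtain ⟨hvA, hwA⟩ := side_nbrs hPup hPus ⟨_, haA⟩ hendsA_vw
    obtain ⟨hvB, hwB⟩ := side_nbrs hQup hQus ⟨_, hbB⟩ hendsB_vw
    obtain ⟨huA, -⟩ := side_nbrs hPvp hPvs ⟨_, haA⟩ hendsA_uw
    obtain ⟨huB, -⟩ := side_nbrs hQvp hQvs ⟨_, hbB⟩ hendsB_uw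
    rcases unique_side hdu huA huB hABd with ⟨y, hadj, hyA, huniq⟩ | ⟨y, hadj, hyB, huniq⟩
    · exact core hnh hdel huv huw hvw hsM hABd huniv hAs hBs hAc hBc hAp hBp
        ⟨_, hbB⟩ hyA hadj huniq huB hvA hwA hnbhd
    · exact core hnh hdel huv huw hvw hsM (fun z h1 h2 => hABd z h2 h1)
        (fun z => by
          rcases huniv z with h | h | h | h | h
          · exact Or.inr (Or.inl h)
          · exact Or.inl h
          · exact Or.inr (Or.inr (Or.inl h))
          · exact Or.inr (Or.inr (Or.inr (Or.inl h)))
          · exact Or.inr (Or.inr (Or.inr (Or.inr h))))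
        hBs hAs hBc hAc hBp hAp
        ⟨_, haA⟩ hyB hadj huniq huA hvB hwB hnbhd
end

section
/- Let G be a hypocyclic graph and let (W, X) be a partition of its vertex set with |W| > 1 and |X| > 1. Then the minimum number of vertex-disjoint paths needed to cover all vertices of the induced subgraph G[W] is strictly less than |X|. -/
open SimpleGraph

/-- A finite graph is hypocyclic if every vertex-deleted subgraph is hamiltonian. -/
def Hypocyclic {α : Type*} [Fintype α] [DecidableEq α] (G : SimpleGraph α) : Prop :=
  ∀ v : α, IsHamiltonianGraph (G.induce ({v}ᶜ : Set α))

/-- The minimum number of pairwise vertex-disjoint paths needed to cover all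
vertices of a graph. -/
noncomputable def pathCoverNumber {β : Type*} (H : SimpleGraph β) : ℕ :=
  sInf {n : ℕ | ∃ P : Fin n → (a : β) × (b : β) × H.Walk a b,
    (∀ i, (P i).2.2.IsPath) ∧
    (∀ i j, i ≠ j → ∀ x, x ∈ (P i).2.2.support → x ∉ (P j).2.2.support) ∧
    (∀ x : β, ∃ i, x ∈ (P i).2.2.support)}


private lemma cover_of_chain {α : Type*} (G : SimpleGraph α) (W : Set α)
    [DecidablePred (· ∈ W)] :
    ∀ L : List α, L.Chain' G.Adj → L.Nodup →
    ∃ ps : List ((a : ↥W) × (b : ↥W) × (G.induce W).Walk a b),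
      (∀ p ∈ ps, p.2.2.IsPath) ∧
      (ps.Pairwise fun p q => ∀ x, x ∈ p.2.2.support → x ∉ q.2.2.support) ∧
      (∀ y : ↥W, (∃ p ∈ ps, y ∈ p.2.2.support) ↔ (y : α) ∈ L) ∧
      ps.length ≤ (L.filter (fun a => decide (a ∉ W))).length + 1 ∧
      ((∀ a ∈ L.head?, a ∉ W) → ps.length ≤ (L.filter (fun a => decide (a ∉ W))).length) ∧
      (∀ a l', L = a :: l' → ∀ ha : a ∈ W, ∃ q qs, ps = q :: qs ∧ q.1 = ⟨a, ha⟩) := by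
  intro L
  induction L with
  | nil =>
    exact fun _ _ => ⟨[], by simp, by simp, by simp, by simp, by simp, by simp⟩
  | cons a l ih =>
    intro hchain hnodup
    obtain ⟨hadj, htl⟩ := List.isChain_cons.mp hchain
    rw [List.nodup_cons] at hnodup
    obtain ⟨hal, hlnd⟩ := hnodup
    obtain ⟨ps, hpath, hdisj, hcov, hb1, hb2, hhead⟩ := ih htl hlnd
    have hnotin : ∀ p ∈ ps, ∀ y : ↥W, y ∈ p.2.2.support → (y : α) ≠ a := by
      intro p hp y hy hya
      exact hal (hya ▸ (hcov y).1 ⟨p, hp, hy⟩)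
    by_cases haW : a ∈ W
    · rcases hl : l with _ | ⟨b, l'⟩
      · -- l = []
        subst hl
        refine ⟨[⟨⟨a, haW⟩, ⟨a, haW⟩, Walk.nil⟩], ?_, ?_, ?_, ?_, ?_, ?_⟩
        · simp [Walk.IsPath.nil]
        · simp
        · intro y
          constructor
          · rintro ⟨p, hp, hy⟩
            rw [List.mem_singleton] at hp
            subst hp
            simp only [Walk.support_nil, List.mem_singleton] at hy
            subst hy
            exact List.mem_singleton_self _
          · intro h
            rw [List.mem_singleton] at h
            refine ⟨_, List.mem_singleton_self _, ?_⟩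
            have : y = (⟨a, haW⟩ : ↥W) := Subtype.ext h
            simp [this]
        · simp
        · intro h; exact absurd haW (by simpa using h a)
        · rintro a0 l0 ⟨rfl, rfl⟩ ha0
          exact ⟨_, [], rfl, rfl⟩
      · subst hl
        by_cases hbW : b ∈ W
        · -- extend the first path
          obtain ⟨q, qs, hps, hq1⟩ := hhead b l' rfl hbW
          have hGab : G.Adj a b := hadj b rfl
          have hadjW' : (G.induce W).Adj ⟨a, haW⟩ q.1 := by
            rw [hq1]; simpa using hGab
          subst hps
          have hqpath : q.2.2.IsPath := hpath q (List.mem_cons_self)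
          have hanotq : (⟨a, haW⟩ : ↥W) ∉ q.2.2.support := fun h =>
            hnotin q (List.mem_cons_self) _ h rfl
          refine ⟨⟨⟨a, haW⟩, q.2.1, Walk.cons hadjW' q.2.2⟩ :: qs, ?_, ?_, ?_, ?_, ?_, ?_⟩
          · intro p hp
            rcases List.mem_cons.mp hp with rfl | hp
            · exact hqpath.cons hanotq
            · exact hpath p (List.mem_cons_of_mem _ hp)
          · rw [List.pairwise_cons] at hdisj ⊢
            refine ⟨?_, hdisj.2⟩
            intro p hp x hx
            simp only [Walk.support_cons, List.mem_cons] at hx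
            rcases hx with rfl | hx
            · exact fun h => hnotin p (List.mem_cons_of_mem _ hp) _ h rfl
            · exact hdisj.1 p hp x hx
          · intro y
            have hc := hcov y
            constructor
            · rintro ⟨p, hp, hy⟩
              rcases List.mem_cons.mp hp with rfl | hp
              · simp only [Walk.support_cons, List.mem_cons] at hy
                rcases hy with rfl | hy
                · exact List.mem_cons_self
                · exact List.mem_cons_of_mem _ (hc.1 ⟨q, List.mem_cons_self, hy⟩)
              · exact List.mem_cons_of_mem _ (hc.1 ⟨p, List.mem_cons_of_mem _ hp, hy⟩)
            · intro hmem
              rcases List.mem_cons.mp hmem with hya | hyl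
              · refine ⟨_, List.mem_cons_self, ?_⟩
                have hyy : y = (⟨a, haW⟩ : ↥W) := Subtype.ext hya
                simp [hyy]
              · obtain ⟨p, hp, hy⟩ := hc.2 hyl
                rcases List.mem_cons.mp hp with rfl | hp
                · exact ⟨_, List.mem_cons_self, by simp [Walk.support_cons, hy]⟩
                · exact ⟨p, List.mem_cons_of_mem _ hp, hy⟩
          · simpa [List.filter_cons, haW] using hb1
          · intro h; exact absurd haW (by simpa using h a)
          · rintro a0 l0 ⟨rfl, rfl⟩ ha0
            exact ⟨_, qs, rfl, rfl⟩
        · -- new singleton path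
          refine ⟨⟨⟨a, haW⟩, ⟨a, haW⟩, Walk.nil⟩ :: ps, ?_, ?_, ?_, ?_, ?_, ?_⟩
          · intro p hp
            rcases List.mem_cons.mp hp with rfl | hp
            · exact Walk.IsPath.nil
            · exact hpath p hp
          · rw [List.pairwise_cons]
            refine ⟨?_, hdisj⟩
            intro p hp x hx
            simp only [Walk.support_nil, List.mem_singleton] at hx
            subst hx
            exact fun h => hnotin p hp _ h rfl
          · intro y
            have hc := hcov y
            constructor
            · rintro ⟨p, hp, hy⟩
              rcases List.mem_cons.mp hp with rfl | hp
              · simp only [Walk.support_nil, List.mem_singleton] at hy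
                subst hy
                exact List.mem_cons_self
              · exact List.mem_cons_of_mem _ (hc.1 ⟨p, hp, hy⟩)
            · intro hmem
              rcases List.mem_cons.mp hmem with hya | hyl
              · refine ⟨_, List.mem_cons_self, ?_⟩
                have hyy : y = (⟨a, haW⟩ : ↥W) := Subtype.ext hya
                simp [hyy]
              · obtain ⟨p, hp, hy⟩ := hc.2 hyl
                exact ⟨p, List.mem_cons_of_mem _ hp, hy⟩
          · have h2 := hb2 (by rintro c hc; simp only [List.head?_cons, Option.mem_def,
              Option.some.injEq] at hc; subst hc; exact hbW)
            simpa [List.filter_cons, haW] using Nat.succ_le_succ h2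
          · intro h; exact absurd haW (by simpa using h a)
          · rintro a0 l0 ⟨rfl, rfl⟩ ha0
            exact ⟨_, ps, rfl, rfl⟩
    · -- a ∉ W
      refine ⟨ps, hpath, hdisj, ?_, ?_, ?_, ?_⟩
      · intro y
        rw [hcov y]
        constructor
        · exact List.mem_cons_of_mem _
        · intro h
          rcases List.mem_cons.mp h with h | h
          · exact absurd (h ▸ y.2) haW
          · exact h
      · simp only [List.filter_cons, decide_eq_true_eq, haW, not_false_iff, if_pos,
          List.length_cons]
        omega
      · intro _
        have : ps.length ≤ (l.filter (fun a => decide (a ∉ W))).length + 1 := hb1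
        simp only [List.filter_cons]
        rw [if_pos (by simpa using haW)]
        simpa using this
      · rintro a0 l0 ⟨rfl, rfl⟩ ha0
        exact absurd ha0 haW

theorem hypocyclic_pathCover_obstruction {α : Type*} [Fintype α] [DecidableEq α]
    (G : SimpleGraph α) (hG : Hypocyclic G) (W : Set α)
    (hW : 1 < W.ncard) (hX : 1 < Wᶜ.ncard) :
    pathCoverNumber (G.induce W) < Wᶜ.ncard := by
  classical
  obtain ⟨x, x', hx, hx', hxx⟩ := (Set.one_lt_ncard_iff (Set.toFinite _)).mp hX
  obtain ⟨v, p, hp⟩ := hG x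
  set S : Set α := ({x}ᶜ : Set α) with hS
  have hx'S : x' ∈ S := by simp [hS, hxx.symm]
  have hu : (⟨x', hx'S⟩ : ↥S) ∈ p.support := hp.mem_support _
  set q := p.rotate _ hu with hq
  have hrot : q.support.tail ~r p.support.tail := Walk.support_rotate p _ hu
  have hptail : ∀ b : ↥S, p.support.tail.count b = 1 := by
    intro b
    rw [← Walk.support_tail_of_not_nil p hp.1.not_nil]
    convert hp.isHamiltonian_tail b using 2
    exact lawful_beq_subsingleton _ _
  have htnd : q.support.tail.Nodup := by
    refine hrot.perm.nodup_iff.mpr ?_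
    exact List.nodup_iff_count_le_one.mpr fun b => le_of_eq (hptail b)
  have htmem : ∀ b : ↥S, b ∈ q.support.tail := by
    intro b
    rw [hrot.perm.mem_iff, ← List.count_pos_iff]
    rw [hptail b]; omega
  have htne : q.support.tail ≠ [] := fun h => by simpa [h] using htmem ⟨x', hx'S⟩
  have hqsupp : q.support = (⟨x', hx'S⟩ : ↥S) :: q.support.tail := Walk.support_eq_cons q
  have h1 : q.support.getLast? = some ⟨x', hx'S⟩ := by
    rw [List.getLast?_eq_getLast q.support_ne_nil, Walk.getLast_support]
  obtain ⟨c, t0, htc⟩ := List.exists_cons_of_ne_nil htne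
  have h2 : q.support.tail.getLast? = some (⟨x', hx'S⟩ : ↥S) := by
    rw [htc]
    rw [hqsupp, htc, List.getLast?_cons_cons] at h1
    exact h1
  have hsplit : q.support.tail.dropLast ++ [(⟨x', hx'S⟩ : ↥S)] = q.support.tail :=
    List.dropLast_append_getLast? _ h2
  set t := q.support.tail.dropLast with ht
  have hund : ((⟨x', hx'S⟩ : ↥S) :: t).Nodup := by
    have h2' : (t ++ [(⟨x', hx'S⟩ : ↥S)]).Nodup := hsplit ▸ htnd
    rw [List.nodup_append] at h2'
    refine List.nodup_cons.mpr ⟨fun hmem => h2'.2.2 _ hmem _ (List.mem_singleton_self _) rfl, h2'.1⟩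
  have hucov : ∀ b : ↥S, b ∈ (⟨x', hx'S⟩ : ↥S) :: t := by
    intro b
    have := htmem b
    rw [← hsplit, List.mem_append] at this
    rcases this with h | h
    · exact List.mem_cons_of_mem _ h
    · rw [List.mem_singleton] at h; exact h ▸ List.mem_cons_self
  have huch : ((⟨x', hx'S⟩ : ↥S) :: t).Chain' (G.induce S).Adj := by
    have h3 : q.support.dropLast.Chain' (G.induce S).Adj := (Walk.isChain_adj_support q).dropLast
    have h4 : q.support.dropLast = (⟨x', hx'S⟩ : ↥S) :: t := by
      rw [hqsupp]
      rw [htc]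
      simp [ht, htc]
    rwa [h4] at h3
  -- pass to the list of vertices of α
  set L : List α := ((⟨x', hx'S⟩ : ↥S) :: t).map Subtype.val with hL
  have hLch : L.Chain' G.Adj := by
    rw [hL]; show List.IsChain _ _; rw [List.isChain_map]
    exact (show List.IsChain _ _ from huch).imp (fun h => by simpa using h)
  have hLnd : L.Nodup := hund.map Subtype.val_injective
  obtain ⟨ps, hpaths, hdisj, hcov, _, hb2, _⟩ := cover_of_chain G W L hLch hLnd
  have hxW : x ∉ W := hx
  have hx'W : x' ∉ W := hx'
  have hlen : ps.length ≤ (L.filter (fun a => decide (a ∉ W))).length := by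
    refine hb2 ?_
    intro a haa
    rw [hL] at haa
    simp only [List.map_cons, List.head?_cons, Option.mem_def, Option.some.injEq] at haa
    subst haa
    exact hx'W
  -- count the filtered list
  have hcount : (L.filter (fun a => decide (a ∉ W))).length ≤ Wᶜ.ncard - 1 := by
    set F := L.filter (fun a => decide (a ∉ W)) with hF
    have hFnd : F.Nodup := hLnd.filter _
    have hsub : F.toFinset ⊆ Wᶜ.toFinset.erase x := by
      intro b hb
      rw [List.mem_toFinset, hF, List.mem_filter] at hb
      obtain ⟨hbL, hbW⟩ := hb
      have hbx : b ≠ x := by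
        rw [hL, List.mem_map] at hbL
        obtain ⟨⟨b', hb'⟩, _, rfl⟩ := hbL
        simpa [hS] using hb'
      rw [Finset.mem_erase, Set.mem_toFinset]
      exact ⟨hbx, by simpa using of_decide_eq_true hbW⟩
    have hcard : F.toFinset.card = F.length := List.toFinset_card_of_nodup hFnd
    have hxmem : x ∈ Wᶜ.toFinset := Set.mem_toFinset.mpr hx
    calc F.length = F.toFinset.card := hcard.symm
      _ ≤ (Wᶜ.toFinset.erase x).card := Finset.card_le_card hsub
      _ = Wᶜ.toFinset.card - 1 := Finset.card_erase_of_mem hxmem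
      _ = Wᶜ.ncard - 1 := by rw [Set.ncard_eq_toFinset_card']
  -- the path cover number is at most ps.length
  have hpcn : pathCoverNumber (G.induce W) ≤ ps.length := by
    apply Nat.sInf_le
    refine ⟨fun i => ps.get i, fun i => hpaths _ (ps.get_mem _), ?_, ?_⟩
    · intro i j hij y hyi hyj
      have hdisj' := List.pairwise_iff_get.mp hdisj
      rcases lt_or_gt_of_ne (fun h : (i : ℕ) = j => hij (Fin.ext h)) with hlt | hlt
      · exact hdisj' ⟨i, i.2⟩ ⟨j, j.2⟩ hlt y hyi hyj
      · exact hdisj' ⟨j, j.2⟩ ⟨i, i.2⟩ hlt y hyj hyi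
    · intro y
      have hyL : (y : α) ∈ L := by
        have hyS : (y : α) ∈ S := by
          simp only [hS, Set.mem_compl_iff, Set.mem_singleton_iff]
          intro h
          exact hxW (h ▸ y.2)
        have := hucov ⟨(y : α), hyS⟩
        rw [hL, List.mem_map]
        exact ⟨⟨(y : α), hyS⟩, this, rfl⟩
      obtain ⟨p0, hp0, hy0⟩ := (hcov y).2 hyL
      obtain ⟨i, hi⟩ := List.mem_iff_get.mp hp0
      refine ⟨i, ?_⟩
      show y ∈ (ps.get i).2.2.support
      rw [hi]; exact hy0
  have hpos : 0 < Wᶜ.ncard := lt_trans Nat.zero_lt_one hX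
  omega
end

section
/- Let G be a hypocyclic graph and (W, X) a partition of its vertices with |W| > 1, |X| > 1, and W an independent set. Fix any vertex v in X, and let n1 (respectively n2) be the number of vertices of X - v adjacent to exactly one (respectively more than one) vertex of W. Then 2*n2 + n1 >= 2*|W|. -/
open SimpleGraph

open SimpleGraph

-- aux: for a hamiltonian cycle, each vertex is fst of exactly one dart and snd of exactly one dart
lemma ham_dart_fst_count {β : Type*} [Fintype β] [DecidableEq β] {H : SimpleGraph β}
    {a : β} {p : H.Walk a a} (hp : p.IsHamiltonianCycle) (y : β) :
    p.darts.countP (fun d => d.fst = y) = 1 := by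
  classical
  have h2 : (p.darts.map (fun d => d.toProd.1)).count y = 1 := by
    rw [SimpleGraph.Walk.map_fst_darts]
    have hgl : p.support.getLast (by simp) = a := p.getLast_support
    have hsplit : p.support = p.support.dropLast ++ [a] := by
      conv_lhs => rw [← List.dropLast_append_getLast (l := p.support) (by simp)]
      rw [hgl]
    by_cases hya : y = a
    · subst hya
      have := hp.count_support_self
      rw [hsplit, List.count_append] at this
      simpa using this
    · have := hp.support_count_of_ne (Ne.symm hya)
      rw [hsplit, List.count_append] at this
      simpa [List.count_singleton, hya, Ne.symm hya] using this
  rw [List.count_eq_countP, List.countP_map] at h2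
  rw [← h2]
  congr 1

lemma ham_dart_snd_count {β : Type*} [Fintype β] [DecidableEq β] {H : SimpleGraph β}
    {a : β} {p : H.Walk a a} (hp : p.IsHamiltonianCycle) (y : β) :
    p.darts.countP (fun d => d.snd = y) = 1 := by
  classical
  have h2 : (p.darts.map (fun d => d.toProd.2)).count y = 1 := by
    rw [SimpleGraph.Walk.map_snd_darts]
    exact (SimpleGraph.Walk.isHamiltonianCycle_iff_isCycle_and_support_count_tail_eq_one.mp hp).2 y
  rw [List.count_eq_countP, List.countP_map] at h2
  rw [← h2]
  congr 1

lemma filter_toFinset_card {γ : Type*} [DecidableEq γ] (L : List γ) (hL : L.Nodup)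
    (q : γ → Prop) [DecidablePred q] :
    (L.toFinset.filter q).card = L.countP (fun d => q d) := by
  have h1 : L.toFinset.filter q = (L.filter (fun d => q d)).toFinset := by
    ext x; simp [List.mem_filter]
  rw [h1, List.toFinset_card_of_nodup (hL.filter _), List.countP_eq_length_filter]
theorem hypocyclic_typeC_obstruction {α : Type*} [Fintype α] [DecidableEq α]
    (G : SimpleGraph α) (hG : Hypocyclic G) (W : Set α)
    (hW : 1 < W.ncard) (hX : 1 < Wᶜ.ncard)
    (hind : ∀ a ∈ W, ∀ b ∈ W, ¬ G.Adj a b)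
    (v : α) (hv : v ∈ Wᶜ) :
    2 * W.ncard ≤
      2 * {x | x ∈ Wᶜ ∧ x ≠ v ∧ 1 < (G.neighborSet x ∩ W).ncard}.ncard
        + {x | x ∈ Wᶜ ∧ x ≠ v ∧ (G.neighborSet x ∩ W).ncard = 1}.ncard := by
  classical
  obtain ⟨a, p, hp⟩ := hG v
  have hvW : v ∉ W := hv
  have hedges : p.edges.Nodup := hp.isCycle.edges_nodup
  have hdarts : p.darts.Nodup := List.Nodup.of_map SimpleGraph.Dart.edge hedges
  set β := ({v}ᶜ : Set α)
  set D : Finset ((G.induce β).Dart) := p.darts.toFinset with hD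
  have hfib_fst : ∀ y : β, (D.filter (fun d => d.fst = y)).card = 1 := by
    intro y; rw [hD, filter_toFinset_card _ hdarts]; exact ham_dart_fst_count hp y
  have hfib_snd : ∀ y : β, (D.filter (fun d => d.snd = y)).card = 1 := by
    intro y; rw [hD, filter_toFinset_card _ hdarts]; exact ham_dart_snd_count hp y
  have hadj : ∀ d : (G.induce β).Dart, G.Adj (d.fst : α) (d.snd : α) := by
    intro d
    have := d.adj
    simpa [SimpleGraph.comap_adj] using this
  set W' : Finset β := Finset.univ.filter (fun x => (x : α) ∈ W) with hW'def
  set X' : Finset β := Finset.univ.filter (fun x => (x : α) ∉ W) with hX'def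
  set Din : Finset ((G.induce β).Dart) := D.filter (fun d => (d.snd : α) ∈ W) with hDin
  set Dout : Finset ((G.induce β).Dart) := D.filter (fun d => (d.fst : α) ∈ W) with hDout
  -- Din and Dout both have cardinality W'.card
  have hDin_card : Din.card = W'.card := by
    rw [Finset.card_eq_sum_card_fiberwise (f := fun d => d.snd) (t := W')
      (by intro d hd; simp only [hW'def, Finset.mem_filter, Finset.mem_univ, true_and]
          rw [hDin] at hd; simpa using (Finset.mem_filter.mp hd).2)]
    rw [Finset.card_eq_sum_ones W']
    refine Finset.sum_congr rfl fun w hw => ?_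
    have : Din.filter (fun d => d.snd = w) = D.filter (fun d => d.snd = w) := by
      rw [hDin, Finset.filter_filter]
      refine Finset.filter_congr fun d _ => ?_
      constructor
      · rintro ⟨_, h⟩; exact h
      · rintro h
        refine ⟨?_, h⟩
        rw [h]
        exact (Finset.mem_filter.mp hw).2
    rw [this, hfib_snd w]
  have hDout_card : Dout.card = W'.card := by
    rw [Finset.card_eq_sum_card_fiberwise (f := fun d => d.fst) (t := W')
      (by intro d hd; simp only [hW'def, Finset.mem_filter, Finset.mem_univ, true_and]
          rw [hDout] at hd; simpa using (Finset.mem_filter.mp hd).2)]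
    rw [Finset.card_eq_sum_ones W']
    refine Finset.sum_congr rfl fun w hw => ?_
    have : Dout.filter (fun d => d.fst = w) = D.filter (fun d => d.fst = w) := by
      rw [hDout, Finset.filter_filter]
      refine Finset.filter_congr fun d _ => ?_
      constructor
      · rintro ⟨_, h⟩; exact h
      · rintro h
        refine ⟨?_, h⟩
        rw [h]
        exact (Finset.mem_filter.mp hw).2
    rw [this, hfib_fst w]
  -- fiberwise over X'
  have hDin_sum : Din.card = ∑ x ∈ X', (Din.filter (fun d => d.fst = x)).card := by
    refine Finset.card_eq_sum_card_fiberwise fun d hd => ?_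
    simp only [hX'def, Finset.coe_filter, Set.mem_setOf_eq, Finset.mem_filter, Finset.mem_univ, true_and]
    intro hfstW
    rw [Finset.mem_coe, hDin, Finset.mem_filter] at hd
    exact hind _ hfstW _ hd.2 (hadj d)
  have hDout_sum : Dout.card = ∑ x ∈ X', (Dout.filter (fun d => d.snd = x)).card := by
    refine Finset.card_eq_sum_card_fiberwise fun d hd => ?_
    simp only [hX'def, Finset.coe_filter, Set.mem_setOf_eq, Finset.mem_filter, Finset.mem_univ, true_and]
    intro hsndW
    rw [Finset.mem_coe, hDout, Finset.mem_filter] at hd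
    exact hind _ hd.2 _ hsndW (hadj d)
  set n : β → ℕ := fun x => (G.neighborSet (x : α) ∩ W).ncard with hn
  -- per-vertex bound
  have hbound : ∀ x ∈ X', (Din.filter (fun d => d.fst = x)).card
      + (Dout.filter (fun d => d.snd = x)).card
      ≤ 2 * (if 1 < n x then 1 else 0) + (if n x = 1 then 1 else 0) := by
    intro x hx
    have hxW : (x : α) ∉ W := by
      rw [hX'def, Finset.mem_filter] at hx; exact hx.2
    have hSfin : (G.neighborSet (x : α) ∩ W).Finite := Set.toFinite _
    have hcin_le : (Din.filter (fun d => d.fst = x)).card ≤ 1 := by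
      rw [← hfib_fst x]
      refine Finset.card_le_card ?_
      intro d hd
      rw [Finset.mem_filter] at hd ⊢
      refine ⟨Finset.filter_subset _ _ hd.1, hd.2⟩
    have hcout_le : (Dout.filter (fun d => d.snd = x)).card ≤ 1 := by
      rw [← hfib_snd x]
      refine Finset.card_le_card ?_
      intro d hd
      rw [Finset.mem_filter] at hd ⊢
      refine ⟨Finset.filter_subset _ _ hd.1, hd.2⟩
    have hin_mem : ∀ d ∈ Din.filter (fun d => d.fst = x),
        (d.snd : α) ∈ G.neighborSet (x : α) ∩ W := by
      intro d hd
      rw [Finset.mem_filter, hDin, Finset.mem_filter] at hd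
      refine ⟨?_, hd.1.2⟩
      have := hadj d
      rw [hd.2] at this
      exact this
    have hout_mem : ∀ d ∈ Dout.filter (fun d => d.snd = x),
        (d.fst : α) ∈ G.neighborSet (x : α) ∩ W := by
      intro d hd
      rw [Finset.mem_filter, hDout, Finset.mem_filter] at hd
      refine ⟨?_, hd.1.2⟩
      have := (hadj d).symm
      rw [hd.2] at this
      exact this
    by_cases h2 : 1 < n x
    · simp only [h2, if_true]
      omega
    by_cases h1 : n x = 1
    · simp only [h2, if_false, h1, if_true]
      -- show not both fibers nonempty
      have hnotboth : (Din.filter (fun d => d.fst = x)).card = 0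
          ∨ (Dout.filter (fun d => d.snd = x)).card = 0 := by
        by_contra hcon
        push_neg at hcon
        obtain ⟨d1, hd1⟩ := Finset.card_pos.mp (Nat.pos_of_ne_zero hcon.1)
        obtain ⟨d2, hd2⟩ := Finset.card_pos.mp (Nat.pos_of_ne_zero hcon.2)
        obtain ⟨z, hz⟩ := Set.ncard_eq_one.mp h1
        have hm1 := hin_mem d1 hd1
        have hm2 := hout_mem d2 hd2
        rw [hz, Set.mem_singleton_iff] at hm1 hm2
        -- d1 and d2 have the same edge
        have hfst1 : d1.fst = x := (Finset.mem_filter.mp hd1).2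
        have hsnd2 : d2.snd = x := (Finset.mem_filter.mp hd2).2
        have hsnd1 : (d1.snd : α) = (d2.fst : α) := hm1.trans hm2.symm
        have hne : d1 ≠ d2 := by
          intro h
          apply hxW
          rw [hDout, Finset.mem_filter] at hd2
          have := (Finset.mem_filter.mp hd2.1).2
          rw [← h, hfst1] at this
          exact this
        have hedge : d1.edge = d2.edge := by
          have e1 : d1.toProd = (x, d2.toProd.1) :=
            Prod.ext hfst1 (Subtype.ext hsnd1)
          have e2 : d2.toProd = (d2.toProd.1, x) := Prod.ext rfl hsnd2
          rw [SimpleGraph.Dart.edge, SimpleGraph.Dart.edge, e1, e2, Sym2.eq_swap]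
        have hmem1 : d1 ∈ p.darts := by
          have := (Finset.mem_filter.mp ((Finset.mem_filter.mp hd1).1)).1
          rwa [hD, List.mem_toFinset] at this
        have hmem2 : d2 ∈ p.darts := by
          have := (Finset.mem_filter.mp ((Finset.mem_filter.mp hd2).1)).1
          rwa [hD, List.mem_toFinset] at this
        exact hne (List.inj_on_of_nodup_map hedges hmem1 hmem2 hedge)
      omega
    · -- n x = 0, both fibers empty
      have h0 : n x = 0 := by omega
      have hempty : G.neighborSet (x : α) ∩ W = ∅ :=
        (Set.ncard_eq_zero hSfin).mp h0
      have hcin0 : (Din.filter (fun d => d.fst = x)).card = 0 := by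
        rw [Finset.card_eq_zero]
        by_contra hne
        obtain ⟨d, hd⟩ := Finset.nonempty_iff_ne_empty.mpr hne
        have := hin_mem d hd
        rw [hempty] at this
        exact this
      have hcout0 : (Dout.filter (fun d => d.snd = x)).card = 0 := by
        rw [Finset.card_eq_zero]
        by_contra hne
        obtain ⟨d, hd⟩ := Finset.nonempty_iff_ne_empty.mpr hne
        have := hout_mem d hd
        rw [hempty] at this
        exact this
      omega
  -- sum it up
  have hsum : 2 * W'.card ≤ 2 * (X'.filter (fun x => 1 < n x)).card
      + (X'.filter (fun x => n x = 1)).card := by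
    have := Finset.sum_le_sum hbound
    rw [Finset.sum_add_distrib] at this
    rw [← hDin_sum, ← hDout_sum] at this
    have hsplit : ∑ x ∈ X', (2 * (if 1 < n x then 1 else 0) + (if n x = 1 then 1 else 0))
        = 2 * (X'.filter (fun x => 1 < n x)).card + (X'.filter (fun x => n x = 1)).card := by
      rw [Finset.sum_add_distrib, ← Finset.mul_sum]
      congr 1
      · congr 1
        rw [Finset.card_filter]
      · rw [Finset.card_filter]
    rw [hsplit] at this
    omega
  -- translate cards to ncards
  have himg : ∀ (P : α → Prop), (((Finset.univ.filter
      (fun x : β => (x : α) ∉ W ∧ P (x : α))).image (Subtype.val)) : Set α)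
      = {x | x ∈ Wᶜ ∧ x ≠ v ∧ P x} := by
    intro P
    ext x
    simp only [Finset.coe_image, Finset.coe_filter, Finset.mem_univ, true_and,
      Set.mem_image, Set.mem_setOf_eq, Set.mem_compl_iff]
    constructor
    · rintro ⟨⟨y, hy⟩, ⟨h1, h2⟩, rfl⟩
      exact ⟨h1, by have hy' : y ∈ ({v}ᶜ : Set α) := hy; simpa using hy', h2⟩
    · rintro ⟨h1, h2, h3⟩
      exact ⟨⟨x, show x ∈ ({v}ᶜ : Set α) by simpa using h2⟩, ⟨h1, h3⟩, rfl⟩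
  have hcard_eq : ∀ (P : α → Prop), {x | x ∈ Wᶜ ∧ x ≠ v ∧ P x}.ncard
      = (Finset.univ.filter (fun x : β => (x : α) ∉ W ∧ P (x : α))).card := by
    intro P
    rw [← himg P, Set.ncard_coe_finset, Finset.card_image_of_injective _ Subtype.coe_injective]
  have hfilter1 : X'.filter (fun x => 1 < n x)
      = Finset.univ.filter (fun x : β => (x : α) ∉ W ∧ 1 < (G.neighborSet (x:α) ∩ W).ncard) := by
    rw [hX'def, Finset.filter_filter]
  have hfilter2 : X'.filter (fun x => n x = 1)
      = Finset.univ.filter (fun x : β => (x : α) ∉ W ∧ (G.neighborSet (x:α) ∩ W).ncard = 1) := by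
    rw [hX'def, Finset.filter_filter]
  have hWcard : W'.card = W.ncard := by
    have h1 : ((W'.image (Subtype.val)) : Set α) = W := by
      ext x
      simp only [Finset.coe_image, Finset.coe_filter, Finset.mem_univ, true_and,
        Set.mem_image, Set.mem_setOf_eq, hW'def]
      constructor
      · rintro ⟨⟨y, hy⟩, h1, rfl⟩; exact h1
      · intro hx
        refine ⟨⟨x, ?_⟩, hx, rfl⟩
        show x ∈ ({v}ᶜ : Set α)
        simp only [Set.mem_compl_iff, Set.mem_singleton_iff]
        rintro rfl; exact hvW hx
    rw [← h1, Set.ncard_coe_finset, Finset.card_image_of_injective _ Subtype.coe_injective]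
  have e1 : {x | x ∈ Wᶜ ∧ x ≠ v ∧ 1 < (G.neighborSet x ∩ W).ncard}.ncard
      = (X'.filter (fun x => 1 < n x)).card := by
    rw [hcard_eq (fun x => 1 < (G.neighborSet x ∩ W).ncard)]
    congr 1
    ext x
    simp [hX'def, hn]
  have e2 : {x | x ∈ Wᶜ ∧ x ≠ v ∧ (G.neighborSet x ∩ W).ncard = 1}.ncard
      = (X'.filter (fun x => n x = 1)).card := by
    rw [hcard_eq (fun x => (G.neighborSet x ∩ W).ncard = 1)]
    congr 1
    ext x
    simp [hX'def, hn]
  rw [e1, e2, ← hWcard]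
  exact hsum
end

section
/- The Petersen graph is hypohamiltonian: it has no hamiltonian cycle, but deleting any single vertex yields a hamiltonian graph. -/
open SimpleGraph

/-- The Petersen graph as the Kneser graph K(5,2): vertices are the 2-element
subsets of a 5-element set, adjacent iff disjoint. -/
def PetersenGraph : SimpleGraph {s : Finset (Fin 5) // s.card = 2} where
  Adj a b := Disjoint a.1 b.1
  symm := ⟨fun a b h => h.symm⟩
  loopless := by
    constructor
    intro a h
    have h2 := a.2
    rw [disjoint_self.mp h] at h2
    simp at h2


abbrev PV := {s : Finset (Fin 5) // s.card = 2}

def pnbrs : Fin 10 → List (Fin 10)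
  | 0 => [7, 8, 9]
  | 1 => [5, 6, 9]
  | 2 => [4, 6, 8]
  | 3 => [4, 5, 7]
  | 4 => [2, 3, 9]
  | 5 => [1, 3, 8]
  | 6 => [1, 2, 7]
  | 7 => [0, 3, 6]
  | 8 => [0, 2, 5]
  | 9 => [0, 1, 4]

def padj (a b : Fin 10) : Bool := (pnbrs a).contains b

lemma padj_symm : ∀ a b : Fin 10, padj a b = true → padj b a = true := by decide
lemma padj_irrefl : ∀ a : Fin 10, ¬ padj a a = true := by decide

def PG10 : SimpleGraph (Fin 10) where
  Adj a b := padj a b = true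
  symm := ⟨fun a b h => padj_symm a b h⟩
  loopless := ⟨fun a h => padj_irrefl a h⟩

instance : DecidableRel PG10.Adj := fun a b => inferInstanceAs (Decidable (padj a b = true))

instance : DecidableRel PetersenGraph.Adj :=
  fun a b => inferInstanceAs (Decidable (Disjoint a.1 b.1))

instance (j : Fin 10) : DecidablePred (· ∈ ({j}ᶜ : Set (Fin 10))) :=
  fun x => decidable_of_iff (¬ x = j) Iff.rfl

instance {s : Set (Fin 10)} [DecidablePred (· ∈ s)] : DecidableRel ((PG10.induce s).Adj) :=
  fun a b => inferInstanceAs (Decidable (padj a.1 b.1 = true))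

def gfun : Fin 10 → PV
  | 0 => ⟨{0, 1}, by decide⟩
  | 1 => ⟨{0, 2}, by decide⟩
  | 2 => ⟨{0, 3}, by decide⟩
  | 3 => ⟨{0, 4}, by decide⟩
  | 4 => ⟨{1, 2}, by decide⟩
  | 5 => ⟨{1, 3}, by decide⟩
  | 6 => ⟨{1, 4}, by decide⟩
  | 7 => ⟨{2, 3}, by decide⟩
  | 8 => ⟨{2, 4}, by decide⟩
  | 9 => ⟨{3, 4}, by decide⟩

def ginv : PV → Fin 10 := fun s => (((List.finRange 10).find? (fun i => gfun i == s)).getD 0)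

def gequiv : Fin 10 ≃ PV where
  toFun := gfun
  invFun := ginv
  left_inv := by decide
  right_inv := by decide

def giso : PG10 ≃g PetersenGraph where
  toEquiv := gequiv
  map_rel_iff' := by
    intro a b
    revert a b
    decide

lemma IsHamiltonianGraph.of_iso {β γ : Type*} [DecidableEq β] [DecidableEq γ]
    {G : SimpleGraph β} {H : SimpleGraph γ} (e : G ≃g H) (h : IsHamiltonianGraph G) :
    IsHamiltonianGraph H := by
  obtain ⟨a, p, hp⟩ := h
  exact ⟨e a, p.map e.toHom, hp.map (f := e.toHom) e.toEquiv.bijective⟩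

def hamExt : Nat → Fin 10 → List (Fin 10) → Bool
  | 0, cur, _ => padj cur 0
  | n+1, cur, un => (pnbrs cur).any (fun w => un.contains w && hamExt n w (un.erase w))

lemma padj_mem {a b : Fin 10} (h : padj a b = true) : b ∈ pnbrs a := by
  simpa [padj] using h

lemma hamExt_key : ∀ (t : List (Fin 10)) (cur : Fin 10) (un : List (Fin 10)),
    un.Perm t → List.Chain (fun a b => padj a b = true) cur (t ++ [(0 : Fin 10)]) →
    hamExt t.length cur un = true := by
  intro t
  induction t with
  | nil =>
    intro cur un _ hc
    exact (List.chain_cons.mp hc).1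
  | cons w t' ih =>
    intro cur un hperm hc
    rw [List.cons_append] at hc
    obtain ⟨hadj, hc'⟩ := List.chain_cons.mp hc
    show (pnbrs cur).any (fun w => un.contains w && hamExt t'.length w (un.erase w)) = true
    rw [List.any_eq_true]
    refine ⟨w, padj_mem hadj, ?_⟩
    rw [Bool.and_eq_true]
    constructor
    · exact List.elem_eq_true_of_mem (hperm.mem_iff.mpr (List.mem_cons_self (a := w) (l := t')))
    · exact ih w (un.erase w) (by simpa using hperm.erase w) hc'

lemma getLast?_of_cons {α : Type*} {a x : α} {l : List α} (h : l ≠ [])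
    (h2 : (a :: l).getLast? = some x) : l.getLast? = some x := by
  cases l with
  | nil => exact absurd rfl h
  | cons b t => rwa [List.getLast?_cons_cons] at h2

lemma pg10_not_ham : ¬ IsHamiltonianGraph PG10 := by
  rintro ⟨a, p, hp⟩
  have h0 : (0 : Fin 10) ∈ p.support := hp.mem_support 0
  set q := p.rotate 0 h0 with hqdef
  have hrot : q.support.tail ~r p.support.tail := Walk.support_rotate p 0 h0
  have hcount : ∀ b : Fin 10, q.support.tail.count b = 1 := by
    intro b
    rw [hrot.perm.count_eq]
    exact (Walk.isHamiltonianCycle_iff_isCycle_and_support_count_tail_eq_one.mp hp).2 b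
  set s := q.support.tail with hsdef
  have hperm : s.Perm [0,1,2,3,4,5,6,7,8,9] := by
    rw [List.perm_iff_count]
    intro b
    rw [hcount b]
    revert b
    decide
  have hs_ne : s ≠ [] := by
    intro h
    have h1 := hcount 0
    rw [h] at h1
    simp at h1
  have hA : q.support.getLast? = some 0 := by
    rw [List.getLast?_eq_getLast (l := q.support) (by simp)]
    exact congrArg some q.getLast_support
  have hB : s.getLast? = some 0 := by
    rw [q.support_eq_cons] at hA
    exact getLast?_of_cons hs_ne hA
  have hsplit : s.dropLast ++ [(0 : Fin 10)] = s :=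
    List.dropLast_append_getLast? 0 (Option.mem_def.mpr hB)
  have hchain : List.Chain (fun a b => padj a b = true) 0 s := by
    have h1 := Walk.isChain_adj_support q
    rw [q.support_eq_cons] at h1
    exact h1
  have htperm : s.dropLast.Perm [1,2,3,4,5,6,7,8,9] := by
    have h1 : (s.dropLast ++ [(0 : Fin 10)]).Perm ((0 : Fin 10) :: [1,2,3,4,5,6,7,8,9]) := by
      rw [hsplit]; exact hperm
    have h2 := (List.perm_append_singleton (0 : Fin 10) s.dropLast).symm.trans h1
    exact h2.cons_inv
  have hkey := hamExt_key s.dropLast 0 [1,2,3,4,5,6,7,8,9] htperm.symm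
    (by rw [hsplit]; exact hchain)
  rw [htperm.length_eq] at hkey
  exact absurd hkey (by decide)

def mkWalk {V : Type*} (G : SimpleGraph V) [DecidableRel G.Adj] [DecidableEq V] :
    (a b : V) → (l : List V) → Option (G.Walk a b)
  | a, b, [] => if h : a = b then some (h ▸ Walk.nil) else none
  | a, b, x :: l => if h : G.Adj a x then (mkWalk G x b l).map (Walk.cons h) else none

def delWalk0 : (PG10.induce ({(0:Fin 10)}ᶜ : Set (Fin 10))).Walk
    ⟨1, of_decide_eq_true rfl⟩ ⟨1, of_decide_eq_true rfl⟩ :=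
  (mkWalk (PG10.induce ({(0:Fin 10)}ᶜ : Set (Fin 10))) (⟨1, of_decide_eq_true rfl⟩ : ({(0:Fin 10)}ᶜ : Set (Fin 10))) ⟨1, of_decide_eq_true rfl⟩ [⟨5, of_decide_eq_true rfl⟩, ⟨8, of_decide_eq_true rfl⟩, ⟨2, of_decide_eq_true rfl⟩, ⟨6, of_decide_eq_true rfl⟩, ⟨7, of_decide_eq_true rfl⟩, ⟨3, of_decide_eq_true rfl⟩, ⟨4, of_decide_eq_true rfl⟩, ⟨9, of_decide_eq_true rfl⟩, ⟨1, of_decide_eq_true rfl⟩]).get (of_decide_eq_true rfl)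

lemma delHam0 : IsHamiltonianGraph (PG10.induce ({(0:Fin 10)}ᶜ : Set (Fin 10))) := by
  refine ⟨_, delWalk0, ?_⟩
  refine Walk.isHamiltonianCycle_iff_isCycle_and_support_count_tail_eq_one.mpr ⟨?_, by decide⟩
  rw [Walk.isCycle_def, Walk.isTrail_def]
  refine ⟨by decide, fun h => absurd (congrArg Walk.length h) (by decide), by decide⟩

def delWalk1 : (PG10.induce ({(1:Fin 10)}ᶜ : Set (Fin 10))).Walk
    ⟨0, of_decide_eq_true rfl⟩ ⟨0, of_decide_eq_true rfl⟩ :=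
  (mkWalk (PG10.induce ({(1:Fin 10)}ᶜ : Set (Fin 10))) (⟨0, of_decide_eq_true rfl⟩ : ({(1:Fin 10)}ᶜ : Set (Fin 10))) ⟨0, of_decide_eq_true rfl⟩ [⟨7, of_decide_eq_true rfl⟩, ⟨6, of_decide_eq_true rfl⟩, ⟨2, of_decide_eq_true rfl⟩, ⟨8, of_decide_eq_true rfl⟩, ⟨5, of_decide_eq_true rfl⟩, ⟨3, of_decide_eq_true rfl⟩, ⟨4, of_decide_eq_true rfl⟩, ⟨9, of_decide_eq_true rfl⟩, ⟨0, of_decide_eq_true rfl⟩]).get (of_decide_eq_true rfl)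

lemma delHam1 : IsHamiltonianGraph (PG10.induce ({(1:Fin 10)}ᶜ : Set (Fin 10))) := by
  refine ⟨_, delWalk1, ?_⟩
  refine Walk.isHamiltonianCycle_iff_isCycle_and_support_count_tail_eq_one.mpr ⟨?_, by decide⟩
  rw [Walk.isCycle_def, Walk.isTrail_def]
  refine ⟨by decide, fun h => absurd (congrArg Walk.length h) (by decide), by decide⟩

def delWalk2 : (PG10.induce ({(2:Fin 10)}ᶜ : Set (Fin 10))).Walk
    ⟨0, of_decide_eq_true rfl⟩ ⟨0, of_decide_eq_true rfl⟩ :=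
  (mkWalk (PG10.induce ({(2:Fin 10)}ᶜ : Set (Fin 10))) (⟨0, of_decide_eq_true rfl⟩ : ({(2:Fin 10)}ᶜ : Set (Fin 10))) ⟨0, of_decide_eq_true rfl⟩ [⟨7, of_decide_eq_true rfl⟩, ⟨6, of_decide_eq_true rfl⟩, ⟨1, of_decide_eq_true rfl⟩, ⟨9, of_decide_eq_true rfl⟩, ⟨4, of_decide_eq_true rfl⟩, ⟨3, of_decide_eq_true rfl⟩, ⟨5, of_decide_eq_true rfl⟩, ⟨8, of_decide_eq_true rfl⟩, ⟨0, of_decide_eq_true rfl⟩]).get (of_decide_eq_true rfl)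

lemma delHam2 : IsHamiltonianGraph (PG10.induce ({(2:Fin 10)}ᶜ : Set (Fin 10))) := by
  refine ⟨_, delWalk2, ?_⟩
  refine Walk.isHamiltonianCycle_iff_isCycle_and_support_count_tail_eq_one.mpr ⟨?_, by decide⟩
  rw [Walk.isCycle_def, Walk.isTrail_def]
  refine ⟨by decide, fun h => absurd (congrArg Walk.length h) (by decide), by decide⟩

def delWalk3 : (PG10.induce ({(3:Fin 10)}ᶜ : Set (Fin 10))).Walk
    ⟨0, of_decide_eq_true rfl⟩ ⟨0, of_decide_eq_true rfl⟩ :=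
  (mkWalk (PG10.induce ({(3:Fin 10)}ᶜ : Set (Fin 10))) (⟨0, of_decide_eq_true rfl⟩ : ({(3:Fin 10)}ᶜ : Set (Fin 10))) ⟨0, of_decide_eq_true rfl⟩ [⟨7, of_decide_eq_true rfl⟩, ⟨6, of_decide_eq_true rfl⟩, ⟨1, of_decide_eq_true rfl⟩, ⟨5, of_decide_eq_true rfl⟩, ⟨8, of_decide_eq_true rfl⟩, ⟨2, of_decide_eq_true rfl⟩, ⟨4, of_decide_eq_true rfl⟩, ⟨9, of_decide_eq_true rfl⟩, ⟨0, of_decide_eq_true rfl⟩]).get (of_decide_eq_true rfl)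

lemma delHam3 : IsHamiltonianGraph (PG10.induce ({(3:Fin 10)}ᶜ : Set (Fin 10))) := by
  refine ⟨_, delWalk3, ?_⟩
  refine Walk.isHamiltonianCycle_iff_isCycle_and_support_count_tail_eq_one.mpr ⟨?_, by decide⟩
  rw [Walk.isCycle_def, Walk.isTrail_def]
  refine ⟨by decide, fun h => absurd (congrArg Walk.length h) (by decide), by decide⟩

def delWalk4 : (PG10.induce ({(4:Fin 10)}ᶜ : Set (Fin 10))).Walk
    ⟨0, of_decide_eq_true rfl⟩ ⟨0, of_decide_eq_true rfl⟩ :=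
  (mkWalk (PG10.induce ({(4:Fin 10)}ᶜ : Set (Fin 10))) (⟨0, of_decide_eq_true rfl⟩ : ({(4:Fin 10)}ᶜ : Set (Fin 10))) ⟨0, of_decide_eq_true rfl⟩ [⟨7, of_decide_eq_true rfl⟩, ⟨3, of_decide_eq_true rfl⟩, ⟨5, of_decide_eq_true rfl⟩, ⟨8, of_decide_eq_true rfl⟩, ⟨2, of_decide_eq_true rfl⟩, ⟨6, of_decide_eq_true rfl⟩, ⟨1, of_decide_eq_true rfl⟩, ⟨9, of_decide_eq_true rfl⟩, ⟨0, of_decide_eq_true rfl⟩]).get (of_decide_eq_true rfl)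

lemma delHam4 : IsHamiltonianGraph (PG10.induce ({(4:Fin 10)}ᶜ : Set (Fin 10))) := by
  refine ⟨_, delWalk4, ?_⟩
  refine Walk.isHamiltonianCycle_iff_isCycle_and_support_count_tail_eq_one.mpr ⟨?_, by decide⟩
  rw [Walk.isCycle_def, Walk.isTrail_def]
  refine ⟨by decide, fun h => absurd (congrArg Walk.length h) (by decide), by decide⟩

def delWalk5 : (PG10.induce ({(5:Fin 10)}ᶜ : Set (Fin 10))).Walk
    ⟨0, of_decide_eq_true rfl⟩ ⟨0, of_decide_eq_true rfl⟩ :=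
  (mkWalk (PG10.induce ({(5:Fin 10)}ᶜ : Set (Fin 10))) (⟨0, of_decide_eq_true rfl⟩ : ({(5:Fin 10)}ᶜ : Set (Fin 10))) ⟨0, of_decide_eq_true rfl⟩ [⟨7, of_decide_eq_true rfl⟩, ⟨3, of_decide_eq_true rfl⟩, ⟨4, of_decide_eq_true rfl⟩, ⟨9, of_decide_eq_true rfl⟩, ⟨1, of_decide_eq_true rfl⟩, ⟨6, of_decide_eq_true rfl⟩, ⟨2, of_decide_eq_true rfl⟩, ⟨8, of_decide_eq_true rfl⟩, ⟨0, of_decide_eq_true rfl⟩]).get (of_decide_eq_true rfl)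

lemma delHam5 : IsHamiltonianGraph (PG10.induce ({(5:Fin 10)}ᶜ : Set (Fin 10))) := by
  refine ⟨_, delWalk5, ?_⟩
  refine Walk.isHamiltonianCycle_iff_isCycle_and_support_count_tail_eq_one.mpr ⟨?_, by decide⟩
  rw [Walk.isCycle_def, Walk.isTrail_def]
  refine ⟨by decide, fun h => absurd (congrArg Walk.length h) (by decide), by decide⟩

def delWalk6 : (PG10.induce ({(6:Fin 10)}ᶜ : Set (Fin 10))).Walk
    ⟨0, of_decide_eq_true rfl⟩ ⟨0, of_decide_eq_true rfl⟩ :=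
  (mkWalk (PG10.induce ({(6:Fin 10)}ᶜ : Set (Fin 10))) (⟨0, of_decide_eq_true rfl⟩ : ({(6:Fin 10)}ᶜ : Set (Fin 10))) ⟨0, of_decide_eq_true rfl⟩ [⟨7, of_decide_eq_true rfl⟩, ⟨3, of_decide_eq_true rfl⟩, ⟨4, of_decide_eq_true rfl⟩, ⟨2, of_decide_eq_true rfl⟩, ⟨8, of_decide_eq_true rfl⟩, ⟨5, of_decide_eq_true rfl⟩, ⟨1, of_decide_eq_true rfl⟩, ⟨9, of_decide_eq_true rfl⟩, ⟨0, of_decide_eq_true rfl⟩]).get (of_decide_eq_true rfl)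

lemma delHam6 : IsHamiltonianGraph (PG10.induce ({(6:Fin 10)}ᶜ : Set (Fin 10))) := by
  refine ⟨_, delWalk6, ?_⟩
  refine Walk.isHamiltonianCycle_iff_isCycle_and_support_count_tail_eq_one.mpr ⟨?_, by decide⟩
  rw [Walk.isCycle_def, Walk.isTrail_def]
  refine ⟨by decide, fun h => absurd (congrArg Walk.length h) (by decide), by decide⟩

def delWalk7 : (PG10.induce ({(7:Fin 10)}ᶜ : Set (Fin 10))).Walk
    ⟨0, of_decide_eq_true rfl⟩ ⟨0, of_decide_eq_true rfl⟩ :=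
  (mkWalk (PG10.induce ({(7:Fin 10)}ᶜ : Set (Fin 10))) (⟨0, of_decide_eq_true rfl⟩ : ({(7:Fin 10)}ᶜ : Set (Fin 10))) ⟨0, of_decide_eq_true rfl⟩ [⟨8, of_decide_eq_true rfl⟩, ⟨2, of_decide_eq_true rfl⟩, ⟨6, of_decide_eq_true rfl⟩, ⟨1, of_decide_eq_true rfl⟩, ⟨5, of_decide_eq_true rfl⟩, ⟨3, of_decide_eq_true rfl⟩, ⟨4, of_decide_eq_true rfl⟩, ⟨9, of_decide_eq_true rfl⟩, ⟨0, of_decide_eq_true rfl⟩]).get (of_decide_eq_true rfl)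

lemma delHam7 : IsHamiltonianGraph (PG10.induce ({(7:Fin 10)}ᶜ : Set (Fin 10))) := by
  refine ⟨_, delWalk7, ?_⟩
  refine Walk.isHamiltonianCycle_iff_isCycle_and_support_count_tail_eq_one.mpr ⟨?_, by decide⟩
  rw [Walk.isCycle_def, Walk.isTrail_def]
  refine ⟨by decide, fun h => absurd (congrArg Walk.length h) (by decide), by decide⟩

def delWalk8 : (PG10.induce ({(8:Fin 10)}ᶜ : Set (Fin 10))).Walk
    ⟨0, of_decide_eq_true rfl⟩ ⟨0, of_decide_eq_true rfl⟩ :=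
  (mkWalk (PG10.induce ({(8:Fin 10)}ᶜ : Set (Fin 10))) (⟨0, of_decide_eq_true rfl⟩ : ({(8:Fin 10)}ᶜ : Set (Fin 10))) ⟨0, of_decide_eq_true rfl⟩ [⟨7, of_decide_eq_true rfl⟩, ⟨3, of_decide_eq_true rfl⟩, ⟨5, of_decide_eq_true rfl⟩, ⟨1, of_decide_eq_true rfl⟩, ⟨6, of_decide_eq_true rfl⟩, ⟨2, of_decide_eq_true rfl⟩, ⟨4, of_decide_eq_true rfl⟩, ⟨9, of_decide_eq_true rfl⟩, ⟨0, of_decide_eq_true rfl⟩]).get (of_decide_eq_true rfl)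

lemma delHam8 : IsHamiltonianGraph (PG10.induce ({(8:Fin 10)}ᶜ : Set (Fin 10))) := by
  refine ⟨_, delWalk8, ?_⟩
  refine Walk.isHamiltonianCycle_iff_isCycle_and_support_count_tail_eq_one.mpr ⟨?_, by decide⟩
  rw [Walk.isCycle_def, Walk.isTrail_def]
  refine ⟨by decide, fun h => absurd (congrArg Walk.length h) (by decide), by decide⟩

def delWalk9 : (PG10.induce ({(9:Fin 10)}ᶜ : Set (Fin 10))).Walk
    ⟨0, of_decide_eq_true rfl⟩ ⟨0, of_decide_eq_true rfl⟩ :=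
  (mkWalk (PG10.induce ({(9:Fin 10)}ᶜ : Set (Fin 10))) (⟨0, of_decide_eq_true rfl⟩ : ({(9:Fin 10)}ᶜ : Set (Fin 10))) ⟨0, of_decide_eq_true rfl⟩ [⟨7, of_decide_eq_true rfl⟩, ⟨3, of_decide_eq_true rfl⟩, ⟨4, of_decide_eq_true rfl⟩, ⟨2, of_decide_eq_true rfl⟩, ⟨6, of_decide_eq_true rfl⟩, ⟨1, of_decide_eq_true rfl⟩, ⟨5, of_decide_eq_true rfl⟩, ⟨8, of_decide_eq_true rfl⟩, ⟨0, of_decide_eq_true rfl⟩]).get (of_decide_eq_true rfl)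

lemma delHam9 : IsHamiltonianGraph (PG10.induce ({(9:Fin 10)}ᶜ : Set (Fin 10))) := by
  refine ⟨_, delWalk9, ?_⟩
  refine Walk.isHamiltonianCycle_iff_isCycle_and_support_count_tail_eq_one.mpr ⟨?_, by decide⟩
  rw [Walk.isCycle_def, Walk.isTrail_def]
  refine ⟨by decide, fun h => absurd (congrArg Walk.length h) (by decide), by decide⟩

lemma pg10_del_ham (j : Fin 10) :
    IsHamiltonianGraph (PG10.induce ({j}ᶜ : Set (Fin 10))) := by
  fin_cases j
  exacts [delHam0, delHam1, delHam2, delHam3, delHam4, delHam5, delHam6, delHam7, delHam8,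
    delHam9]

theorem petersen_hypohamiltonian : Hypohamiltonian PetersenGraph := by
  refine ⟨⟨⟨{0, 1}, by decide⟩⟩, ?_, ?_⟩
  · intro h
    exact pg10_not_ham (h.of_iso giso.symm)
  · intro v
    obtain ⟨j, rfl⟩ : ∃ j, (giso j : PV) = v := ⟨giso.symm v, giso.toEquiv.apply_symm_apply v⟩
    refine (pg10_del_ham j).of_iso ?_
    exact {
      toEquiv := Equiv.subtypeEquiv giso.toEquiv (fun x => by
        simp [Equiv.apply_eq_iff_eq])
      map_rel_iff' := giso.map_rel_iff }
end

section
/- A cubic hypohamiltonian graph has girth at least 4 (i.e., contains no triangle). -/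
open SimpleGraph

open Walk
section aux

variable {α : Type*} [Fintype α] [DecidableEq α]

lemma cubic_no_triangle (G : SimpleGraph α) [DecidableRel G.Adj]
    (hcubic : ∀ x : α, G.degree x = 3) (hG : Hypohamiltonian G) {a b c : α}
    (hab : G.Adj a b) (hbc : G.Adj b c) (hca : G.Adj c a) : False := by
  classical
  set S : Set α := ({a}ᶜ : Set α) with hS
  have hbS : b ∈ S := by simp [hS, hab.ne']
  have hcS : c ∈ S := by simp [hS, (hca.ne : c ≠ a)]
  set H : SimpleGraph S := G.induce S with hH
  set b' : S := ⟨b, hbS⟩ with hb'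
  set c' : S := ⟨c, hcS⟩ with hc'
  obtain ⟨v0, p, hp⟩ := hG.2.2 a
  have hb'' : b' ∈ p.support := hp.mem_support b'
  -- a cycle through b' covering all vertices of S
  obtain ⟨q, hq, hcov⟩ : ∃ q : H.Walk b' b', q.IsCycle ∧ ∀ z : S, z ∈ q.support := by
    refine ⟨p.rotate b' hb'', hp.isCycle.rotate hb'', fun z => ?_⟩
    have hz := hp.mem_support z
    rw [Walk.rotate, mem_support_append_iff]
    conv at hz => rw [← take_spec p hb'', mem_support_append_iff]
    tauto
  have hlen : 3 ≤ q.length := hq.three_le_length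
  -- decompose q
  cases q with
  | nil => simp at hlen
  | cons h₁ q₁ =>
    rename_i x
    obtain ⟨y, q₃, h₂, heq⟩ := exists_cons_eq_concat h₁ q₁
    have hyb : H.Adj y b' := h₂
    -- basic facts
    have hq₁path : q₁.IsPath := ((cons_isCycle_iff q₁ h₁).mp hq).1
    have hnotmem : s(b', x) ∉ q₁.edges := ((cons_isCycle_iff q₁ h₁).mp hq).2
    have hedges : s(b', x) :: q₁.edges = q₃.edges ++ [s(y, b')] := by
      have := congrArg Walk.edges heq
      simpa [edges_concat, List.concat_eq_append] using this
    have hlq : q₁.length + 1 = q₃.length + 1 := by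
      have := congrArg Walk.length heq
      simpa [length_concat] using this
    -- x ≠ y
    have hxy : x ≠ y := by
      intro hxyeq
      subst hxyeq
      apply hnotmem
      have hq3ne : q₃.edges ≠ [] := by
        intro hnil
        have := congrArg List.length hedges
        simp [hnil, length_edges] at this
        simp [length_cons] at hlen
        have := congrArg List.length hnil
        rw [length_edges, List.length_nil] at this
        omega
      obtain ⟨e, es, hes⟩ := List.exists_cons_of_ne_nil hq3ne
      rw [hes] at hedges
      have : q₁.edges = es ++ [s(x, b')] := by
        have := congrArg List.tail hedges
        simpa using this
      rw [this]
      simp [Sym2.eq_swap]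
    -- c' is x or y
    have hc'xy : c' = x ∨ c' = y := by
      have hxv : x.val ∈ (G.neighborFinset b).erase a := by
        simp only [Finset.mem_erase, mem_neighborFinset]
        exact ⟨x.prop, h₁⟩
      have hyv : y.val ∈ (G.neighborFinset b).erase a := by
        simp only [Finset.mem_erase, mem_neighborFinset]
        exact ⟨y.prop, hyb.symm⟩
      have hcv : c ∈ (G.neighborFinset b).erase a := by
        simp only [Finset.mem_erase, mem_neighborFinset]
        exact ⟨hca.ne, hbc⟩
      have hcard : ((G.neighborFinset b).erase a).card = 2 := by
        rw [Finset.card_erase_of_mem (by simp [mem_neighborFinset, hab.symm])]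
        rw [card_neighborFinset_eq_degree, hcubic b]
      have hxyv : x.val ≠ y.val := fun hv => hxy (Subtype.ext hv)
      have hsub : ({x.val, y.val} : Finset α) ⊆ (G.neighborFinset b).erase a := by
        intro z hz
        rcases Finset.mem_insert.mp hz with rfl | hz
        · exact hxv
        · rw [Finset.mem_singleton] at hz; subst hz; exact hyv
      have := Finset.eq_of_subset_of_card_le hsub (by rw [hcard, Finset.card_pair hxyv])
      rw [← this] at hcv
      rcases Finset.mem_insert.mp hcv with h | h
      · left; exact Subtype.ext h
      · right; exact Subtype.ext (Finset.mem_singleton.mp h)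
    -- in either case, get a hamiltonian-ish path r : H.Walk c' b'
    obtain ⟨r, hrpath, hrcov⟩ : ∃ r : H.Walk c' b', r.IsPath ∧ ∀ z : S, z ∈ r.support := by
      rcases hc'xy with rfl | rfl
      · refine ⟨q₁, hq₁path, fun z => ?_⟩
        have := hcov z
        rw [support_cons, List.mem_cons] at this
        rcases this with rfl | h
        · exact end_mem_support _
        · exact h
      · -- c' = y : use q₃.reverse
        have hsupp : b' :: q₁.support = q₃.support ++ [b'] := by
          have := congrArg Walk.support heq
          simpa [support_cons, support_concat, List.concat_eq_append] using this
        have hT : q₁.support = q₁.support.dropLast ++ [b'] := by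
          conv_lhs => rw [← List.dropLast_append_getLast (l := q₁.support) (by simp)]
          rw [getLast_support]
        have hq3supp : q₃.support = b' :: q₁.support.dropLast := by
          have h1 : (b' :: q₁.support).dropLast = q₃.support := by
            rw [hsupp]; simp
          rw [← h1]
          rw [List.dropLast_cons_of_ne_nil (by simp)]
        have hnodupT : q₁.support.Nodup := hq₁path.support_nodup
        have hbnot : b' ∉ q₁.support.dropLast := by
          intro hmem
          rw [hT] at hnodupT
          rw [List.nodup_append] at hnodupT
          exact hnodupT.2.2 b' hmem b' (by simp) rfl
        have hq₃path : q₃.IsPath := by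
          apply IsPath.mk'
          rw [hq3supp]
          exact List.nodup_cons.mpr ⟨hbnot, (List.Nodup.sublist (List.dropLast_sublist _) hnodupT)⟩
        refine ⟨q₃.reverse, hq₃path.reverse, fun z => ?_⟩
        rw [support_reverse, List.mem_reverse, hq3supp]
        have := hcov z
        rw [support_cons, List.mem_cons] at this
        rcases this with rfl | h
        · simp
        · rw [hT, List.mem_append] at h
          rcases h with h | h
          · simp [h]
          · simp at h; subst h; simp
    -- map r down to G
    let f : H →g G := ⟨Subtype.val, fun {u v} h => h⟩
    have hfinj : Function.Injective f := Subtype.val_injective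
    set r' : G.Walk c b := r.map f with hr'
    have hr'path : r'.IsPath := r.map_isPath_of_injective hfinj hrpath
    have har' : a ∉ r'.support := by
      rw [hr', Walk.support_map]
      rintro hmem
      obtain ⟨z, hz, hza⟩ := List.mem_map.mp hmem
      exact z.prop hza
    have hmem' : ∀ z : α, z ≠ a → z ∈ r'.support := by
      intro z hz
      rw [hr', Walk.support_map]
      exact List.mem_map.mpr ⟨⟨z, by simp [hS, hz]⟩, hrcov _, rfl⟩
    -- build the hamiltonian cycle of G
    refine hG.2.1 ⟨a, Walk.cons hca.symm (r'.concat hab.symm), ?_, ?_⟩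
    · -- IsCycle
      rw [cons_isCycle_iff]
      constructor
      · rw [isPath_def, support_concat]
        rw [List.nodup_append]
        exact ⟨hr'path.support_nodup, by simp, by simpa using fun x hx (h : x = a) => har' (h ▸ hx)⟩
      · rw [edges_concat, List.concat_eq_append, List.mem_append]
        rintro (hmem | hmem)
        · exact har' (r'.fst_mem_support_of_mem_edges hmem)
        · rw [List.mem_singleton, Sym2.eq_iff] at hmem
          rcases hmem with ⟨h1, h2⟩ | ⟨h1, h2⟩
          · exact hab.ne h1
          · exact hbc.ne h2.symm
    · -- hamiltonian tail
      intro z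
      rw [support_tail_of_not_nil _ not_nil_cons, support_cons, List.tail_cons, support_concat]
      rw [List.count_append]
      by_cases hz : z = a
      · subst hz
        rw [List.count_eq_zero_of_not_mem har']
        simp
      · rw [List.count_eq_one_of_mem hr'path.support_nodup (hmem' z hz)]
        simp [hz, List.count_cons, Ne.symm hz]

end aux

theorem cubic_hypohamiltonian_girth_ge_four {α : Type*} [Fintype α] [DecidableEq α]
    (G : SimpleGraph α) [DecidableRel G.Adj] (hcubic : ∀ x : α, G.degree x = 3)
    (hG : Hypohamiltonian G) :
    4 ≤ G.egirth := by
  classical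
  rw [SimpleGraph.le_egirth]
  intro u w hw
  have h3 := hw.three_le_length
  by_contra hlt
  push_neg at hlt
  have hl4 : w.length < 4 := by exact_mod_cast hlt
  have hl3 : w.length = 3 := by omega
  clear hw hlt hl4 h3
  cases w with
  | nil => simp at hl3
  | cons h p =>
    cases p with
    | nil => simp at hl3
    | cons h2 p2 =>
      cases p2 with
      | nil => simp at hl3
      | cons h3 p3 =>
        rename_i v1 v2 v3
        have hp3 : p3.length = 0 := by
          simp only [Walk.length_cons] at hl3; omega
        have hvu : v3 = u := by
          have h0 := p3.getVert_zero
          have h1 := p3.getVert_of_length_le (i := 0) (by omega)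
          exact h0.symm.trans h1
        subst hvu
        exact cubic_no_triangle G hcubic hG h h2 h3
end

section
/- Every hypohamiltonian graph is cyclically 4-edge-connected. -/
open SimpleGraph

namespace HypoAux
open SimpleGraph.Walk
variable {α : Type*} [DecidableEq α] {G : SimpleGraph α}

lemma not_mem_dropLast_of_getLast {l : List α} (hl : l.Nodup) (h : l ≠ [])
    {u : α} (hu : l.getLast h = u) : u ∉ l.dropLast := by
  intro hmem
  have h2 := List.dropLast_concat_getLast h
  rw [← h2, List.nodup_append] at hl
  exact hl.2.2 _ hmem _ (List.mem_singleton_self _) hu.symm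

lemma dart_fst_ne {u : α} : ∀ {a b : α} (p : G.Walk a b), u ∉ p.support.dropLast →
    ∀ d ∈ p.darts, d.fst ≠ u := by
  intro a b p
  induction p with
  | nil => intro _ d hd; simp at hd
  | cons ha q ih =>
    intro hu d hd
    rw [Walk.support_cons, q.support_eq_cons, List.dropLast_cons₂] at hu
    simp only [List.mem_cons, not_or] at hu
    rw [Walk.darts_cons, List.mem_cons] at hd
    rcases hd with rfl | hd
    · exact fun hh => hu.1 hh.symm
    · exact ih (by rw [q.support_eq_cons]; exact hu.2) d hd

lemma cycle_cons_of_dart_fst {u : α} {c : G.Walk u u} (hc : c.IsCycle) {d : G.Dart}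
    (hd : d ∈ c.darts) (hfst : d.fst = u) :
    ∃ (h : G.Adj u d.snd) (q : G.Walk d.snd u), c = Walk.cons h q := by
  cases c with
  | nil => exact absurd rfl hc.ne_nil
  | @cons _ w _ ha q =>
    rw [Walk.darts_cons, List.mem_cons] at hd
    have hnd : q.support.Nodup := by
      have := hc.support_nodup
      rwa [Walk.support_cons, List.tail_cons] at this
    rcases hd with rfl | hd
    · exact ⟨ha, q, rfl⟩
    · exfalso
      refine dart_fst_ne q ?_ d hd hfst
      exact not_mem_dropLast_of_getLast hnd q.support_ne_nil q.getLast_support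

lemma isCycle_reverse_s15 {u : α} {c : G.Walk u u} (hc : c.IsCycle) : c.reverse.IsCycle := by
  refine ⟨⟨hc.isTrail.reverse, fun hn => hc.ne_nil ?_⟩, ?_⟩
  · rw [← Walk.nil_iff_eq_nil, Walk.nil_iff_length_eq]
    have := congrArg Walk.length hn
    simpa using this
  · rw [Walk.support_reverse, List.tail_reverse, List.nodup_reverse]
    cases c with
    | nil => simp
    | @cons _ w _ ha q =>
      have hnd : q.support.Nodup := by
        have := hc.support_nodup
        rwa [Walk.support_cons, List.tail_cons] at this
      rw [Walk.support_cons, q.support_eq_cons, List.dropLast_cons₂, ← q.support_eq_cons]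
      refine List.Nodup.cons ?_ (hnd.sublist (List.dropLast_sublist _))
      exact not_mem_dropLast_of_getLast hnd q.support_ne_nil q.getLast_support

/-- An edge of a cycle incident to its basepoint: the cycle or its reverse starts with it. -/
lemma cycle_cons_of_edge {u x : α} {c : G.Walk u u} (hc : c.IsCycle)
    (he : s(u, x) ∈ c.edges) :
    (∃ (h : G.Adj u x) (q : G.Walk x u), c = Walk.cons h q) ∨
    (∃ (h : G.Adj u x) (q : G.Walk x u), c.reverse = Walk.cons h q) := by
  rw [Walk.edges, List.mem_map] at he
  obtain ⟨d, hd, hde⟩ := he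
  obtain ⟨⟨df, ds⟩, hadj⟩ := d
  rw [dart_edge_eq_mk'_iff] at hde
  simp only [Prod.mk.injEq, Prod.swap_prod_mk] at hde
  rcases hde with ⟨rfl, rfl⟩ | ⟨rfl, rfl⟩
  · left
    obtain ⟨h, q, hq⟩ := cycle_cons_of_dart_fst hc hd rfl
    exact ⟨h, q, hq⟩
  · right
    have hd' : (⟨(df, ds), hadj⟩ : G.Dart).symm ∈ c.reverse.darts := by
      rw [Walk.mem_darts_reverse, Dart.symm_symm]; exact hd
    obtain ⟨h, q, hq⟩ := cycle_cons_of_dart_fst (isCycle_reverse_s15 hc) hd' rfl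
    exact ⟨h, q, hq⟩

/-- A walk with no crossing dart stays inside `S`. -/
lemma support_subset_of_no_cross {S : Set α} : ∀ {a b : α} (p : G.Walk a b), a ∈ S →
    (∀ d ∈ p.darts, (d.fst ∈ S ↔ d.snd ∈ S)) → ∀ z ∈ p.support, z ∈ S := by
  intro a b p
  induction p with
  | nil => intro ha _ z hz; rw [Walk.support_nil, List.mem_singleton] at hz; rwa [hz]
  | @cons _ w _ ha q ih =>
    intro haS hcr z hz
    have hw : w ∈ S := by
      have := hcr ⟨(_, _), ha⟩ (by rw [Walk.darts_cons]; exact List.mem_cons_self)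
      exact this.mp haS
    rw [Walk.support_cons, List.mem_cons] at hz
    rcases hz with rfl | hz
    · exact haS
    · exact ih hw (fun d hd => hcr d (by rw [Walk.darts_cons]; exact List.mem_cons_of_mem _ hd)) z hz

/-- Splitting a walk from `S` to `Sᶜ` whose only crossing edge is `s(x,y)`. -/
lemma split_one_cross {S : Set α} {x y : α} (hx : x ∈ S) (hy : y ∉ S) :
    ∀ {a b : α} (p : G.Walk a b), a ∈ S → b ∉ S → p.edges.Nodup →
    (∀ d ∈ p.darts, (d.fst ∈ S ↔ d.snd ∈ S) ∨ d.edge = s(x, y)) →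
    ∃ (q : G.Walk a x) (r : G.Walk y b),
      p.support = q.support ++ r.support ∧
      (∀ z ∈ q.support, z ∈ S) ∧ (∀ z ∈ r.support, z ∉ S) := by
  intro a b p
  induction p with
  | nil => intro ha hb; exact absurd ha hb
  | @cons c w _ ha q ih =>
    intro haS hbS hnd hcr
    rw [Walk.edges_cons, List.nodup_cons] at hnd
    by_cases hw : w ∈ S
    · obtain ⟨q', r', hsup, hq', hr'⟩ := ih hw hbS hnd.2
        (fun d hd => hcr d (by rw [Walk.darts_cons]; exact List.mem_cons_of_mem _ hd))
      refine ⟨Walk.cons ha q', r', ?_, ?_, hr'⟩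
      · rw [Walk.support_cons, Walk.support_cons, hsup, List.cons_append]
      · intro z hz
        rw [Walk.support_cons, List.mem_cons] at hz
        rcases hz with rfl | hz
        · exact haS
        · exact hq' z hz
    · have hd0 : (⟨(c, w), ha⟩ : G.Dart) ∈ (Walk.cons ha q).darts := by
        rw [Walk.darts_cons]; exact List.mem_cons_self
      have hedge : s(c, w) = s(x, y) := by
        rcases hcr _ hd0 with h | h
        · exact absurd (h.mp haS) hw
        · exact h
      rw [Sym2.eq_iff] at hedge
      rcases hedge with ⟨rfl, rfl⟩ | ⟨rfl, rfl⟩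
      · -- c = x, w = y
        have hnc : ∀ d ∈ q.darts, (d.fst ∈ S ↔ d.snd ∈ S) := by
          intro d hd
          rcases hcr d (by rw [Walk.darts_cons]; exact List.mem_cons_of_mem _ hd) with h | h
          · exact h
          · exfalso
            apply hnd.1
            rw [← h]
            exact List.mem_map_of_mem (f := Dart.edge) hd
        have hqout : ∀ z ∈ q.support, z ∈ Sᶜ := by
          refine support_subset_of_no_cross q hw ?_
          intro d hd
          rw [Set.mem_compl_iff, Set.mem_compl_iff, not_iff_not]
          exact hnc d hd
        refine ⟨Walk.nil, q, ?_, ?_, fun z hz => hqout z hz⟩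
        · rw [Walk.support_cons, Walk.support_nil, List.singleton_append]
        · intro z hz
          rw [Walk.support_nil, List.mem_singleton] at hz
          rwa [hz]
      · exact absurd haS hy

lemma mem_support_rotate' {u x : α} {c : G.Walk u u} (h : x ∈ c.support) {z : α} :
    z ∈ (c.rotate _ h).support ↔ z ∈ c.support := by
  constructor
  · intro hz
    rw [Walk.mem_support_iff] at hz
    rcases hz with rfl | hz
    · exact h
    · rw [(Walk.support_rotate c _ h).mem_iff] at hz
      exact List.mem_of_mem_tail hz
  · intro hz
    by_cases hzx : z = x
    · subst hzx; exact Walk.start_mem_support _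
    rw [Walk.mem_support_iff] at hz
    have hz' : z ∈ c.support.tail := by
      rcases hz with rfl | hz
      · cases c with
        | nil => rw [Walk.mem_support_nil_iff] at h; exact absurd h.symm hzx
        | cons ha q => rw [Walk.support_cons, List.tail_cons]; exact q.end_mem_support
      · exact hz
    rw [Walk.mem_support_iff]
    right
    rw [(Walk.support_rotate c _ h).mem_iff]
    exact hz'

/-- A cycle meeting both `S` and `Sᶜ` uses at least two distinct crossing edges. -/
lemma two_cross {S : Set α} {u : α} {c : G.Walk u u} (hc : c.IsCycle) {x y : α}
    (hx : x ∈ c.support) (hy : y ∈ c.support) (hxS : x ∈ S) (hyS : y ∉ S) :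
    ∃ e₁ ∈ c.edges, ∃ e₂ ∈ c.edges, e₁ ≠ e₂ ∧
      (∃ a ∈ S, ∃ b ∈ Sᶜ, e₁ = s(a, b)) ∧ (∃ a ∈ S, ∃ b ∈ Sᶜ, e₂ = s(a, b)) := by
  set c' := c.rotate _ hx with hc'
  have hy' : y ∈ c'.support := (mem_support_rotate' hx).mpr hy
  set t := c'.takeUntil y hy' with ht
  set r := c'.dropUntil y hy' with hr
  have hspec : t.append r = c' := Walk.take_spec c' hy'
  obtain ⟨d₁, hd₁, hd₁f, hd₁s⟩ := t.exists_boundary_dart S hxS hyS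
  obtain ⟨d₂, hd₂, hd₂f, hd₂s⟩ := r.exists_boundary_dart Sᶜ hyS (by simpa using hxS)
  have hd₂s' : d₂.snd ∈ S := by simpa using hd₂s
  have hedges : c'.edges = t.edges ++ r.edges := by
    rw [← hspec, Walk.edges_append]
  have hnd : c'.edges.Nodup := ((hc.rotate hx).isTrail).edges_nodup
  have he₁ : d₁.edge ∈ t.edges := List.mem_map_of_mem (f := Dart.edge) hd₁
  have he₂ : d₂.edge ∈ r.edges := List.mem_map_of_mem (f := Dart.edge) hd₂
  have hne : d₁.edge ≠ d₂.edge := by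
    intro hcontra
    rw [hedges, List.nodup_append] at hnd
    exact hnd.2.2 _ he₁ _ (hcontra ▸ he₂) rfl
  have hmemc : ∀ e ∈ c'.edges, e ∈ c.edges := fun e he =>
    (Walk.rotate_edges c _ hx).mem_iff.mp he
  refine ⟨d₁.edge, hmemc _ (by rw [hedges]; exact List.mem_append_left _ he₁),
          d₂.edge, hmemc _ (by rw [hedges]; exact List.mem_append_right _ he₂),
          hne, ⟨d₁.fst, hd₁f, d₁.snd, hd₁s, rfl⟩,
          ⟨d₂.snd, hd₂s', d₂.fst, hd₂f, ?_⟩⟩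
  rw [Sym2.eq_swap]; rfl




lemma extract_cons {S : Set α} {x2 y2 x3 y3 : α} (hx2 : x2 ∈ S) (hy2 : y2 ∉ S)
    (hx3 : x3 ∈ S) (hy3 : y3 ∉ S) (h : G.Adj y2 x2) (c' : G.Walk x2 y2)
    (hc : (Walk.cons h c').IsCycle)
    (hcross : ∀ d ∈ (Walk.cons h c').darts,
      (d.fst ∈ S ↔ d.snd ∈ S) ∨ d.edge = s(x2, y2) ∨ d.edge = s(x3, y3)) :
    ∃ (p : G.Walk x2 x3) (r : G.Walk y3 y2),
      (∀ z ∈ (Walk.cons h c').support, z ∈ p.support ∨ z ∈ r.support) ∧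
      p.support.Nodup ∧ r.support.Nodup ∧
      (∀ z ∈ p.support, z ∈ S) ∧ (∀ z ∈ r.support, z ∉ S) := by
  have hnd : (Walk.cons h c').edges.Nodup := hc.isTrail.edges_nodup
  rw [Walk.edges_cons, List.nodup_cons] at hnd
  have hnotin : s(x2, y2) ∉ c'.edges := by
    rw [Sym2.eq_swap]; exact hnd.1
  have hcross' : ∀ d ∈ c'.darts, (d.fst ∈ S ↔ d.snd ∈ S) ∨ d.edge = s(x3, y3) := by
    intro d hd
    rcases hcross d (by rw [Walk.darts_cons]; exact List.mem_cons_of_mem _ hd) with h1 | h1 | h1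
    · exact Or.inl h1
    · exact absurd (h1 ▸ List.mem_map_of_mem (f := Dart.edge) hd) hnotin
    · exact Or.inr h1
  obtain ⟨q, r, hsup, hq, hr⟩ := split_one_cross hx3 hy3 c' hx2 hy2 hnd.2 hcross'
  have hndsup : c'.support.Nodup := by
    have := hc.support_nodup
    rwa [Walk.support_cons, List.tail_cons] at this
  rw [hsup, List.nodup_append] at hndsup
  refine ⟨q, r, ?_, hndsup.1, hndsup.2.1, hq, hr⟩
  intro z hz
  rw [Walk.support_cons, List.mem_cons] at hz
  rcases hz with rfl | hz
  · exact Or.inr r.end_mem_support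
  · rw [hsup, List.mem_append] at hz
    exact hz

lemma extract {S : Set α} {x2 y2 x3 y3 : α} (hx2 : x2 ∈ S) (hy2 : y2 ∉ S)
    (hx3 : x3 ∈ S) (hy3 : y3 ∉ S) {c : G.Walk y2 y2} (hc : c.IsCycle)
    (he2 : s(y2, x2) ∈ c.edges)
    (hcross : ∀ d ∈ c.darts,
      (d.fst ∈ S ↔ d.snd ∈ S) ∨ d.edge = s(x2, y2) ∨ d.edge = s(x3, y3)) :
    ∃ (p : G.Walk x2 x3) (r : G.Walk y3 y2),
      (∀ z ∈ c.support, z ∈ p.support ∨ z ∈ r.support) ∧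
      p.support.Nodup ∧ r.support.Nodup ∧
      (∀ z ∈ p.support, z ∈ S) ∧ (∀ z ∈ r.support, z ∉ S) := by
  rcases cycle_cons_of_edge hc he2 with ⟨h, q, hq⟩ | ⟨h, q, hq⟩
  · subst hq
    exact extract_cons hx2 hy2 hx3 hy3 h q hc hcross
  · have hrc : c.reverse.IsCycle := isCycle_reverse_s15 hc
    rw [hq] at hrc
    have hrcross : ∀ d ∈ (Walk.cons h q).darts,
        (d.fst ∈ S ↔ d.snd ∈ S) ∨ d.edge = s(x2, y2) ∨ d.edge = s(x3, y3) := by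
      intro d hd
      rw [← hq, Walk.mem_darts_reverse] at hd
      rcases hcross d.symm hd with h1 | h1 | h1
      · exact Or.inl (by exact ⟨fun a => h1.mpr a, fun a => h1.mp a⟩)
      · exact Or.inr (Or.inl (by rw [← Dart.edge_symm]; exact h1))
      · exact Or.inr (Or.inr (by rw [← Dart.edge_symm]; exact h1))
    obtain ⟨p, r, hcov, h1, h2, h3, h4⟩ := extract_cons hx2 hy2 hx3 hy3 h q hrc hrcross
    refine ⟨p, r, ?_, h1, h2, h3, h4⟩
    intro z hz
    apply hcov
    rw [← hq, Walk.support_reverse, List.mem_reverse]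
    exact hz

lemma four_le_ncard_of {β : Type*} {s : Set β} (hs : s.Finite) {a b c d : β}
    (ha : a ∈ s) (hb : b ∈ s) (hc : c ∈ s) (hd : d ∈ s)
    (hab : a ≠ b) (hac : a ≠ c) (had : a ≠ d) (hbc : b ≠ c) (hbd : b ≠ d) (hcd : c ≠ d) :
    4 ≤ s.ncard := by
  have hsub : ({a, b, c, d} : Set β) ⊆ s := by
    intro x hx
    simp only [Set.mem_insert_iff, Set.mem_singleton_iff] at hx
    rcases hx with rfl | rfl | rfl | rfl <;> assumption
  have h4 : ({a, b, c, d} : Set β).ncard = 4 := by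
    rw [Set.ncard_insert_of_notMem (by simp [hab, hac, had]) (Set.toFinite _),
        Set.ncard_insert_of_notMem (by simp [hbc, hbd]) (Set.toFinite _),
        Set.ncard_insert_of_notMem (by simp [hcd]) (Set.toFinite _),
        Set.ncard_singleton]
  exact h4 ▸ Set.ncard_le_ncard hsub hs

lemma edge_support {x y : α} (p : G.Walk x y) (e : Sym2 α) (he : e ∈ p.edges) :
    ∀ z ∈ e, z ∈ p.support := by
  induction e with
  | _ s t =>
    intro z hz
    rw [Sym2.mem_iff] at hz
    rcases hz with rfl | rfl
    · exact p.fst_mem_support_of_mem_edges he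
    · exact p.snd_mem_support_of_mem_edges he


end HypoAux

open HypoAux SimpleGraph.Walk in
theorem hypohamiltonian_cyclically_four_edge_connected {α : Type*} [Fintype α] [DecidableEq α]
    (G : SimpleGraph α) (hG : Hypohamiltonian G) (A : Set α)
    (hA : ¬ (G.induce A).IsAcyclic) (hB : ¬ (G.induce Aᶜ).IsAcyclic) :
    4 ≤ {e ∈ G.edgeSet | ∃ a ∈ A, ∃ b ∈ Aᶜ, e = s(a, b)}.ncard := by
  classical
  obtain ⟨hne, hnotham, hdel⟩ := hG
  set F : Set (Sym2 α) := {e ∈ G.edgeSet | ∃ a ∈ A, ∃ b ∈ Aᶜ, e = s(a, b)} with hFdef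
  by_contra hcon
  push_neg at hcon
  have hcon3 : F.ncard ≤ 3 := by omega
  -- two distinct vertices on each side
  have hA2 : ∃ x ∈ A, ∃ y ∈ A, x ≠ y := by
    unfold SimpleGraph.IsAcyclic at hA
    push_neg at hA
    obtain ⟨v, c, hc⟩ := hA
    cases c with
    | nil => exact absurd rfl hc.ne_nil
    | cons ha q => exact ⟨_, v.2, _, (_ : ↥A).2, Subtype.coe_injective.ne ha.ne⟩
  have hB2 : ∃ x ∈ Aᶜ, ∃ y ∈ Aᶜ, x ≠ y := by
    unfold SimpleGraph.IsAcyclic at hB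
    push_neg at hB
    obtain ⟨v, c, hc⟩ := hB
    cases c with
    | nil => exact absurd rfl hc.ne_nil
    | cons ha q => exact ⟨_, v.2, _, (_ : ↥(Aᶜ)).2, Subtype.coe_injective.ne ha.ne⟩
  -- deleted-vertex hamiltonian cycles, mapped into G
  have delcyc : ∀ v : α, ∃ (u : α) (c : G.Walk u u), c.IsCycle ∧
      (∀ z : α, z ∈ c.support ↔ z ≠ v) := by
    intro v
    obtain ⟨a, p, hp⟩ := hdel v
    let f : G.induce ({v}ᶜ : Set α) ↪g G := SimpleGraph.Embedding.induce ({v}ᶜ : Set α)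
    refine ⟨a, p.map f.toHom, hp.isCycle.map (by simpa using f.injective), ?_⟩
    intro z
    show z ∈ (p.map f.toHom).support ↔ z ≠ v
    rw [Walk.support_map, List.mem_map]
    constructor
    · rintro ⟨w, hw, rfl⟩
      show (w : α) ≠ v
      have h2 := w.2
      rwa [Set.mem_compl_iff, Set.mem_singleton_iff] at h2
    · intro hz
      exact ⟨⟨z, by rw [Set.mem_compl_iff, Set.mem_singleton_iff]; exact hz⟩,
        hp.mem_support _, rfl⟩
  -- crossing darts give members of F
  have crossF : ∀ (v : α) {u : α} (c : G.Walk u u), (∀ z, z ∈ c.support ↔ z ≠ v) →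
      ∀ d ∈ c.darts, (d.fst ∈ A ↔ d.snd ∈ A) ∨ (d.edge ∈ F ∧ v ∉ d.edge) := by
    intro v u c hsupp d hd
    by_cases hiff : (d.fst ∈ A ↔ d.snd ∈ A)
    · exact Or.inl hiff
    right
    have hfs : d.fst ≠ v := (hsupp _).mp (Walk.dart_fst_mem_support_of_mem_darts c hd)
    have hss : d.snd ≠ v := (hsupp _).mp (Walk.dart_snd_mem_support_of_mem_darts c hd)
    have hedge : d.edge = s(d.fst, d.snd) := rfl
    constructor
    · refine ⟨d.edge_mem, ?_⟩
      by_cases hf : d.fst ∈ A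
      · have hs : d.snd ∉ A := fun hs => hiff (iff_of_true hf hs)
        exact ⟨d.fst, hf, d.snd, hs, hedge⟩
      · have hs : d.snd ∈ A := by
          by_contra hs
          exact hiff (iff_of_false hf hs)
        exact ⟨d.snd, hs, d.fst, hf, by rw [hedge, Sym2.eq_swap]⟩
    · rw [hedge, Sym2.mem_iff]
      push_neg
      exact ⟨fun h => hfs h.symm, fun h => hss h.symm⟩
  -- key: for every vertex there are two distinct F-edges avoiding it
  have key : ∀ v : α, ∃ e₁ ∈ F, ∃ e₂ ∈ F, e₁ ≠ e₂ ∧ v ∉ e₁ ∧ v ∉ e₂ := by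
    intro v
    obtain ⟨u, c, hcyc, hsupp⟩ := delcyc v
    obtain ⟨x, hxA, x', hx'A, hxx'⟩ := hA2
    obtain ⟨y, hyB, y', hy'B, hyy'⟩ := hB2
    obtain ⟨a, haA, hav⟩ : ∃ a ∈ A, a ≠ v := by
      by_cases h : x = v
      · exact ⟨x', hx'A, fun h' => hxx' (h' ▸ h ▸ rfl)⟩
      · exact ⟨x, hxA, h⟩
    obtain ⟨b, hbB, hbv⟩ : ∃ b ∈ Aᶜ, b ≠ v := by
      by_cases h : y = v
      · exact ⟨y', hy'B, fun h' => hyy' (h' ▸ h ▸ rfl)⟩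
      · exact ⟨y, hyB, h⟩
    obtain ⟨e₁, he₁, e₂, he₂, hne, hcr₁, hcr₂⟩ :=
      two_cross hcyc ((hsupp a).mpr hav) ((hsupp b).mpr hbv) haA hbB
    have mk : ∀ e ∈ c.edges, (∃ a ∈ A, ∃ b ∈ Aᶜ, e = s(a, b)) → e ∈ F ∧ v ∉ e := by
      rintro e he ⟨a1, ha1, b1, hb1, rfl⟩
      refine ⟨⟨c.edges_subset_edgeSet he, a1, ha1, b1, hb1, rfl⟩, ?_⟩
      rw [Sym2.mem_iff]
      push_neg
      exact ⟨fun h => (hsupp _).mp (c.fst_mem_support_of_mem_edges he) h.symm,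
             fun h => (hsupp _).mp (c.snd_mem_support_of_mem_edges he) h.symm⟩
    obtain ⟨hF₁, hv₁⟩ := mk e₁ he₁ hcr₁
    obtain ⟨hF₂, hv₂⟩ := mk e₂ he₂ hcr₂
    exact ⟨e₁, hF₁, e₂, hF₂, hne, hv₁, hv₂⟩
  have hFfin : F.Finite := Set.toFinite F
  -- distinct F-edges are vertex disjoint
  have hdisjF : ∀ e ∈ F, ∀ e' ∈ F, e ≠ e' → ∀ w ∈ e, w ∉ e' := by
    intro e he e' he' hnee w hwe hwe'
    obtain ⟨e₁, h1, e₂, h2, h12, hw1, hw2⟩ := key w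
    have h4 : 4 ≤ F.ncard := four_le_ncard_of hFfin he he' h1 h2 hnee
      (fun h => hw1 (h ▸ hwe)) (fun h => hw2 (h ▸ hwe))
      (fun h => hw1 (h ▸ hwe')) (fun h => hw2 (h ▸ hwe')) h12
    omega
  -- a general membership-in-F maker
  have memF : ∀ (v : α) {u : α} (c : G.Walk u u), (∀ z, z ∈ c.support ↔ z ≠ v) →
      ∀ e ∈ c.edges, (∃ a ∈ A, ∃ b ∈ Aᶜ, e = s(a, b)) → e ∈ F ∧ v ∉ e := by
    rintro v u c hsupp e he ⟨a1, ha1, b1, hb1, rfl⟩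
    refine ⟨⟨c.edges_subset_edgeSet he, a1, ha1, b1, hb1, rfl⟩, ?_⟩
    rw [Sym2.mem_iff]
    push_neg
    exact ⟨fun h => (hsupp _).mp (c.fst_mem_support_of_mem_edges he) h.symm,
           fun h => (hsupp _).mp (c.snd_mem_support_of_mem_edges he) h.symm⟩
  -- pick the three edges of F
  obtain ⟨v₀⟩ := hne
  obtain ⟨f₂, hf₂F, f₃, hf₃F, hf23, -, -⟩ := key v₀
  obtain ⟨hf₂E, a₂, ha₂, b₂, hb₂, hf₂⟩ := hf₂F
  have hf₂F : f₂ ∈ F := ⟨hf₂E, a₂, ha₂, b₂, hb₂, hf₂⟩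
  obtain ⟨hf₃E, a₃, ha₃, b₃, hb₃, hf₃⟩ := hf₃F
  have hf₃F : f₃ ∈ F := ⟨hf₃E, a₃, ha₃, b₃, hb₃, hf₃⟩
  have ha₂f₂ : a₂ ∈ f₂ := by rw [hf₂]; exact Sym2.mem_mk_left _ _
  have hb₂f₂ : b₂ ∈ f₂ := by rw [hf₂]; exact Sym2.mem_mk_right _ _
  have ha₃f₃ : a₃ ∈ f₃ := by rw [hf₃]; exact Sym2.mem_mk_left _ _
  have hb₃f₃ : b₃ ∈ f₃ := by rw [hf₃]; exact Sym2.mem_mk_right _ _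
  obtain ⟨g, hgF, g', hg'F, hgg', hga, hg'a⟩ := key a₂
  have hgne2 : g ≠ f₂ := fun h => hga (h ▸ ha₂f₂)
  have hg'ne2 : g' ≠ f₂ := fun h => hg'a (h ▸ ha₂f₂)
  have hone : g = f₃ ∨ g' = f₃ := by
    by_contra hcc
    push_neg at hcc
    have h4 := four_le_ncard_of hFfin hf₂F hf₃F hgF hg'F hf23 (Ne.symm hgne2)
      (Ne.symm hg'ne2) (Ne.symm hcc.1) (Ne.symm hcc.2) hgg'
    omega
  obtain ⟨f₁, hf₁F, hf₁ne₂, hf₁ne₃, ha₂nf₁⟩ :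
      ∃ f₁ ∈ F, f₁ ≠ f₂ ∧ f₁ ≠ f₃ ∧ a₂ ∉ f₁ := by
    rcases hone with h | h
    · exact ⟨g', hg'F, hg'ne2, fun h' => hgg' (h' ▸ h.symm ▸ rfl), hg'a⟩
    · exact ⟨g, hgF, hgne2, fun h' => hgg' (h ▸ h' ▸ rfl), hga⟩
  obtain ⟨hf₁E, a₁, ha₁, b₁, hb₁, hf₁⟩ := hf₁F
  have hf₁F : f₁ ∈ F := ⟨hf₁E, a₁, ha₁, b₁, hb₁, hf₁⟩
  have ha₁f₁ : a₁ ∈ f₁ := by rw [hf₁]; exact Sym2.mem_mk_left _ _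
  have hb₁f₁ : b₁ ∈ f₁ := by rw [hf₁]; exact Sym2.mem_mk_right _ _
  -- F = {f₁, f₂, f₃}
  have hFeq : ∀ e ∈ F, e = f₁ ∨ e = f₂ ∨ e = f₃ := by
    intro e he
    by_contra hcc
    push_neg at hcc
    have h4 := four_le_ncard_of hFfin he hf₁F hf₂F hf₃F hcc.1 hcc.2.1 hcc.2.2
      hf₁ne₂ hf₁ne₃ hf23
    omega
  -- distinctness facts
  have hb₂nf₁ : b₂ ∉ f₁ := hdisjF f₂ hf₂F f₁ hf₁F (Ne.symm hf₁ne₂) b₂ hb₂f₂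
  have hb₂nf₃ : b₂ ∉ f₃ := hdisjF f₂ hf₂F f₃ hf₃F hf23 b₂ hb₂f₂
  have ha₂nf₃ : a₂ ∉ f₃ := hdisjF f₂ hf₂F f₃ hf₃F hf23 a₂ ha₂f₂
  have ha₁ne₂ : a₁ ≠ a₂ := fun h => ha₂nf₁ (h ▸ ha₁f₁)
  have hb₁ne₂ : b₁ ≠ a₂ := fun h => (Set.mem_compl_iff _ _).mp (h ▸ hb₁) ha₂
  have hb₁neb₂ : b₁ ≠ b₂ := fun h => hb₂nf₁ (h ▸ hb₁f₁)
  have ha₁neb₂ : a₁ ≠ b₂ := fun h => (Set.mem_compl_iff _ _).mp (h ▸ hb₂) ha₁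
  have hb₁nf₃ : b₁ ∉ f₃ := hdisjF f₁ hf₁F f₃ hf₃F hf₁ne₃ b₁ hb₁f₁
  have ha₁nf₃ : a₁ ∉ f₃ := hdisjF f₁ hf₁F f₃ hf₃F hf₁ne₃ a₁ ha₁f₁
  have hb₁ne₃ : b₁ ≠ b₃ := fun h => hb₁nf₃ (h ▸ hb₃f₃)
  have ha₁ne₃ : a₁ ≠ a₃ := fun h => ha₁nf₃ (h ▸ ha₃f₃)
  -- the cycle avoiding a₂
  obtain ⟨u₁, c₁, hc₁cyc, hc₁supp⟩ := delcyc a₂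
  have hc₁cross : ∀ d ∈ c₁.darts,
      (d.fst ∈ A ↔ d.snd ∈ A) ∨ d.edge = s(a₁, b₁) ∨ d.edge = s(a₃, b₃) := by
    intro d hd
    rcases crossF a₂ c₁ hc₁supp d hd with h | ⟨hF, hv⟩
    · exact Or.inl h
    rcases hFeq d.edge hF with h | h | h
    · exact Or.inr (Or.inl (h.trans hf₁))
    · exact absurd (by rw [h]; exact ha₂f₂) hv
    · exact Or.inr (Or.inr (h.trans hf₃))
  have ha₁s₁ : a₁ ∈ c₁.support := (hc₁supp a₁).mpr ha₁ne₂
  have hb₁s₁ : b₁ ∈ c₁.support := (hc₁supp b₁).mpr hb₁ne₂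
  have hf₁c₁ : f₁ ∈ c₁.edges := by
    obtain ⟨e₁, he₁c, e₂, he₂c, hne12, hcr1, hcr2⟩ :=
      two_cross hc₁cyc ha₁s₁ hb₁s₁ ha₁ hb₁
    have m : ∀ e ∈ c₁.edges, (∃ a ∈ A, ∃ b ∈ Aᶜ, e = s(a, b)) → e = f₁ ∨ e = f₃ := by
      intro e he hcr
      obtain ⟨heF, hev⟩ := memF a₂ c₁ hc₁supp e he hcr
      rcases hFeq e heF with h | h | h
      · exact Or.inl h
      · exact absurd (by rw [h]; exact ha₂f₂) hev
      · exact Or.inr h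
    rcases m e₁ he₁c hcr1 with h1 | h1
    · exact h1 ▸ he₁c
    rcases m e₂ he₂c hcr2 with h2 | h2
    · exact h2 ▸ he₂c
    · exact absurd (h1.trans h2.symm) hne12
  -- rotate at b₁ and extract
  have hc₁'cyc : (c₁.rotate _ hb₁s₁).IsCycle := hc₁cyc.rotate hb₁s₁
  have he2' : s(b₁, a₁) ∈ (c₁.rotate _ hb₁s₁).edges := by
    rw [(Walk.rotate_edges c₁ _ hb₁s₁).mem_iff, Sym2.eq_swap, ← hf₁]
    exact hf₁c₁
  obtain ⟨p₁, r₁, hcov₁, hp₁nd, hr₁nd, hp₁A, hr₁B⟩ :=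
    extract (S := A) (x2 := a₁) (y2 := b₁) (x3 := a₃) (y3 := b₃) ha₁ (by rwa [Set.mem_compl_iff] at hb₁) ha₃
      (by rwa [Set.mem_compl_iff] at hb₃) hc₁'cyc he2'
      (by
        intro d hd
        rcases hc₁cross d ((Walk.rotate_darts c₁ _ hb₁s₁).mem_iff.mp hd) with h | h | h
        · exact Or.inl h
        · exact Or.inr (Or.inl h)
        · exact Or.inr (Or.inr h))
  have hr₁cov : ∀ z ∈ Aᶜ, z ∈ r₁.support := by
    intro z hz
    have hzA : z ∉ A := by rwa [Set.mem_compl_iff] at hz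
    have hzs : z ∈ (c₁.rotate _ hb₁s₁).support :=
      (mem_support_rotate' hb₁s₁).mpr ((hc₁supp z).mpr (fun h => hzA (h ▸ ha₂)))
    rcases hcov₁ z hzs with h | h
    · exact absurd (hp₁A z h) hzA
    · exact h
  -- the cycle avoiding b₂
  obtain ⟨u₂, c₂, hc₂cyc, hc₂supp⟩ := delcyc b₂
  have hc₂cross : ∀ d ∈ c₂.darts,
      (d.fst ∈ Aᶜ ↔ d.snd ∈ Aᶜ) ∨ d.edge = s(b₁, a₁) ∨ d.edge = s(b₃, a₃) := by
    intro d hd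
    rcases crossF b₂ c₂ hc₂supp d hd with h | ⟨hF, hv⟩
    · exact Or.inl (by rw [Set.mem_compl_iff, Set.mem_compl_iff]; exact not_iff_not.mpr h)
    rcases hFeq d.edge hF with h | h | h
    · exact Or.inr (Or.inl (by rw [h, hf₁, Sym2.eq_swap]))
    · exact absurd (by rw [h]; exact hb₂f₂) hv
    · exact Or.inr (Or.inr (by rw [h, hf₃, Sym2.eq_swap]))
  have ha₁s₂ : a₁ ∈ c₂.support := (hc₂supp a₁).mpr ha₁neb₂
  have hb₁s₂ : b₁ ∈ c₂.support := (hc₂supp b₁).mpr hb₁neb₂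
  have hf₁c₂ : f₁ ∈ c₂.edges := by
    obtain ⟨e₁, he₁c, e₂, he₂c, hne12, hcr1, hcr2⟩ :=
      two_cross hc₂cyc ha₁s₂ hb₁s₂ ha₁ hb₁
    have m : ∀ e ∈ c₂.edges, (∃ a ∈ A, ∃ b ∈ Aᶜ, e = s(a, b)) → e = f₁ ∨ e = f₃ := by
      intro e he hcr
      obtain ⟨heF, hev⟩ := memF b₂ c₂ hc₂supp e he hcr
      rcases hFeq e heF with h | h | h
      · exact Or.inl h
      · exact absurd (by rw [h]; exact hb₂f₂) hev
      · exact Or.inr h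
    rcases m e₁ he₁c hcr1 with h1 | h1
    · exact h1 ▸ he₁c
    rcases m e₂ he₂c hcr2 with h2 | h2
    · exact h2 ▸ he₂c
    · exact absurd (h1.trans h2.symm) hne12
  have hc₂'cyc : (c₂.rotate _ ha₁s₂).IsCycle := hc₂cyc.rotate ha₁s₂
  have he2'' : s(a₁, b₁) ∈ (c₂.rotate _ ha₁s₂).edges := by
    rw [(Walk.rotate_edges c₂ _ ha₁s₂).mem_iff, ← hf₁]
    exact hf₁c₂
  obtain ⟨p₂, r₂, hcov₂, hp₂nd, hr₂nd, hp₂B, hr₂A⟩ :=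
    extract (S := Aᶜ) (x2 := b₁) (y2 := a₁) (x3 := b₃) (y3 := a₃) (hb₁ : b₁ ∈ Aᶜ) (Set.notMem_compl_iff.mpr ha₁)
      (hb₃ : b₃ ∈ Aᶜ) (Set.notMem_compl_iff.mpr ha₃) hc₂'cyc he2''
      (by
        intro d hd
        rcases hc₂cross d ((Walk.rotate_darts c₂ _ ha₁s₂).mem_iff.mp hd) with h | h | h
        · exact Or.inl h
        · exact Or.inr (Or.inl h)
        · exact Or.inr (Or.inr h))
  have hr₂cov : ∀ z ∈ A, z ∈ r₂.support := by
    intro z hz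
    have hzs : z ∈ (c₂.rotate _ ha₁s₂).support :=
      (mem_support_rotate' ha₁s₂).mpr ((hc₂supp z).mpr (fun h => hb₂ (h ▸ hz)))
    rcases hcov₂ z hzs with h | h
    · exact absurd hz (Set.mem_compl_iff _ _ |>.mp (hp₂B z h))
    · exact h
  have hr₂A' : ∀ z ∈ r₂.support, z ∈ A := fun z hz =>
    Set.notMem_compl_iff.mp (hr₂A z hz)
  -- glue the two paths into a hamiltonian cycle of G
  have hadj₁ : G.Adj a₁ b₁ := by
    rw [hf₁] at hf₁E
    exact hf₁E
  have hadj₃ : G.Adj a₃ b₃ := by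
    rw [hf₃] at hf₃E
    exact hf₃E
  -- r₂ : G.Walk a₃ a₁ covers A; r₁ : G.Walk b₃ b₁ covers Aᶜ
  set W : G.Walk b₁ b₁ :=
    Walk.cons hadj₁.symm ((r₂.reverse).append (Walk.cons hadj₃ r₁)) with hW
  have hWtail : W.support.tail = r₂.reverse.support ++ r₁.support := by
    rw [hW, Walk.support_cons, List.tail_cons, Walk.support_append,
      Walk.support_cons, List.tail_cons]
  have hcount : ∀ z : α, W.support.tail.count z = 1 := by
    intro z
    rw [hWtail, List.count_append]
    by_cases hz : z ∈ A
    · rw [List.count_eq_one_of_mem (by rw [Walk.support_reverse]; exact List.nodup_reverse.mpr hr₂nd)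
        (by rw [Walk.support_reverse, List.mem_reverse]; exact hr₂cov z hz),
        List.count_eq_zero.mpr (fun h => (hr₁B z h) hz)]
    · rw [List.count_eq_zero.mpr
        (fun h => hz (hr₂A' z (by rwa [Walk.support_reverse, List.mem_reverse] at h))),
        List.count_eq_one_of_mem hr₁nd (hr₁cov z (Set.mem_compl_iff _ _ |>.mpr hz))]
  have hWtrail : W.edges.Nodup := by
    have hWedges : W.edges = s(b₁, a₁) :: (r₂.reverse.edges ++ s(a₃, b₃) :: r₁.edges) := by
      rw [hW, Walk.edges_cons, Walk.edges_append, Walk.edges_cons]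
    rw [hWedges]
    have hr₂e : ∀ e ∈ r₂.reverse.edges, ∀ z ∈ e, z ∈ A := by
      intro e he z hz
      rw [Walk.edges_reverse, List.mem_reverse] at he
      exact hr₂A' z (edge_support r₂ e he z hz)
    have hr₁e : ∀ e ∈ r₁.edges, ∀ z ∈ e, z ∉ A := by
      intro e he z hz
      exact hr₁B z (edge_support r₁ e he z hz)
    refine List.Nodup.cons ?_ (List.Nodup.append ?_ ?_ ?_)
    · rw [List.mem_append, List.mem_cons]
      push_neg
      refine ⟨fun h => ?_, fun h => ?_, fun h => ?_⟩
      · exact (by rwa [Set.mem_compl_iff] at hb₁ : b₁ ∉ A)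
          (hr₂e _ h b₁ (Sym2.mem_mk_left _ _))
      · rw [Sym2.eq_iff] at h
        rcases h with ⟨h1, h2⟩ | ⟨h1, h2⟩
        · apply (Set.mem_compl_iff A b₁).mp hb₁
          rw [h1]
          exact ha₃
        · exact hb₁ne₃ h1
      · exact (hr₁e _ h a₁ (Sym2.mem_mk_right _ _)) ha₁
    · rw [Walk.edges_reverse, List.nodup_reverse]
      exact Walk.edges_nodup_of_support_nodup hr₂nd
    · refine List.Nodup.cons (fun h => ?_) (Walk.edges_nodup_of_support_nodup hr₁nd)
      exact (hr₁e _ h a₃ (Sym2.mem_mk_left _ _)) ha₃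
    · intro e he he'
      rw [List.mem_cons] at he'
      rcases he' with rfl | he'
      · exact (by rwa [Set.mem_compl_iff] at hb₃ : b₃ ∉ A)
          (hr₂e _ he b₃ (Sym2.mem_mk_right _ _))
      · induction e with
        | _ st tt =>
          exact (hr₁e _ he' st (Sym2.mem_mk_left _ _)) (hr₂e _ he st (Sym2.mem_mk_left _ _))
  have hWcyc : W.IsHamiltonianCycle := by
    rw [Walk.isHamiltonianCycle_iff_isCycle_and_support_count_tail_eq_one]
    refine ⟨?_, hcount⟩
    rw [Walk.isCycle_def]
    refine ⟨⟨hWtrail⟩, ?_, ?_⟩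
    · rw [hW]; exact fun h => by simp at h
    · rw [List.nodup_iff_count_le_one]
      intro z
      rw [hcount z]
  exact hnotham ⟨b₁, W, hWcyc⟩
end

section
/- Let G be a hypocyclic graph and (W, X) a partition of its vertices with |W| > 1 and |X| > 1, such that the induced subgraph G[W] has no edges. Then |X| > |W|. -/
open SimpleGraph

lemma exists_succ {β : Type*} [DecidableEq β] (H : SimpleGraph β)
    (h : IsHamiltonianGraph H) :
    ∃ f : β → β, Function.Injective f ∧ ∀ b, H.Adj b (f b) := by
  classical
  obtain ⟨a, p, hp⟩ := h
  set L : List β := p.support.tail with hLdef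
  have hcount : ∀ b : β, L.count b = 1 :=
    (SimpleGraph.Walk.isHamiltonianCycle_iff_isCycle_and_support_count_tail_eq_one.mp hp).2
  have hmem : ∀ b : β, b ∈ L := fun b => List.count_pos_iff.mp (by rw [hcount b]; norm_num)
  have hnodup : L.Nodup := hp.isCycle.support_nodup
  have hne : L ≠ [] := by
    intro h0
    exact (List.not_mem_nil (a := a)) (h0 ▸ hmem a)
  have hn0 : 0 < L.length := List.length_pos_iff.mpr hne
  have hchain : List.Chain' H.Adj (a :: L) := by
    have := p.isChain_adj_support
    rwa [p.support_eq_cons] at this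
  have hchainL : List.Chain' H.Adj L := (List.isChain_cons.mp hchain).2
  have hlast : L.getLast hne = a := by
    have h1 : p.support.getLast? = some a := by
      rw [List.getLast?_eq_getLast (by simp), p.getLast_support]
    have h2 : p.support.getLast? = some (L.getLast hne) := by
      rw [p.support_eq_cons, List.getLast?_eq_getLast (List.cons_ne_nil a _),
        List.getLast_cons hne]
    rw [h1] at h2
    exact (Option.some_injective _ h2).symm
  have hidx : ∀ b : β, L.idxOf b < L.length := fun b => List.idxOf_lt_length_iff.mpr (hmem b)
  refine ⟨fun b => L[(L.idxOf b + 1) % L.length]'(Nat.mod_lt _ hn0), ?_, ?_⟩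
  · intro b1 b2 hb
    simp only at hb
    have h12 : (L.idxOf b1 + 1) % L.length = (L.idxOf b2 + 1) % L.length :=
      (List.Nodup.getElem_inj_iff hnodup).mp hb
    have h1 := hidx b1; have h2 := hidx b2
    have heq : L.idxOf b1 = L.idxOf b2 := by
      rcases Nat.lt_or_ge (L.idxOf b1 + 1) L.length with hlt | hge
      · rcases Nat.lt_or_ge (L.idxOf b2 + 1) L.length with hlt2 | hge2
        · rw [Nat.mod_eq_of_lt hlt, Nat.mod_eq_of_lt hlt2] at h12; omega
        · have e2 : L.idxOf b2 + 1 = L.length := by omega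
          rw [Nat.mod_eq_of_lt hlt, e2, Nat.mod_self] at h12; omega
      · have e1 : L.idxOf b1 + 1 = L.length := by omega
        rcases Nat.lt_or_ge (L.idxOf b2 + 1) L.length with hlt2 | hge2
        · rw [e1, Nat.mod_self, Nat.mod_eq_of_lt hlt2] at h12; omega
        · omega
    exact (List.idxOf_inj (hmem b1)).mp heq
  · intro b
    have hb : L[L.idxOf b]'(hidx b) = b := List.getElem_idxOf (hidx b)
    have hib := hidx b
    simp only
    rcases Nat.lt_or_ge (L.idxOf b + 1) L.length with hlt | hge
    · have hmod : (L.idxOf b + 1) % L.length = L.idxOf b + 1 := Nat.mod_eq_of_lt hlt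
      have hadj := List.isChain_iff_getElem.mp hchainL (L.idxOf b) (by omega)
      rw [hb] at hadj
      convert hadj using 2
    · have e1 : L.idxOf b + 1 = L.length := by omega
      have hmod : (L.idxOf b + 1) % L.length = 0 := by rw [e1, Nat.mod_self]
      have hbeq : b = a := by
        have e2 : L.idxOf b = L.length - 1 := by omega
        rw [← hlast, List.getLast_eq_getElem, ← hb]
        congr 1
      have hadj : H.Adj a (L.head hne) := by
        rcases List.isChain_cons.mp hchain with ⟨h1, _⟩
        exact h1 _ (List.head?_eq_head hne)
      have h0 : L[(L.idxOf b + 1) % L.length]'(Nat.mod_lt _ hn0) = L.head hne := by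
        have : L[0]'hn0 = L.head hne := List.getElem_zero hn0
        rw [← this]
        congr 1
      rw [h0, hbeq]
      exact hadj

theorem hypocyclic_independent_partition {α : Type*} [Fintype α] [DecidableEq α]
    (G : SimpleGraph α) (hG : Hypocyclic G) (W : Set α)
    (hW : 1 < W.ncard) (hX : 1 < Wᶜ.ncard)
    (hedgeless : ∀ a ∈ W, ∀ b ∈ W, ¬ G.Adj a b) :
    W.ncard < Wᶜ.ncard := by
  classical
  have hXne : Wᶜ.Nonempty := by
    rw [Set.nonempty_iff_ne_empty]
    intro h
    rw [h] at hX
    simp at hX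
  obtain ⟨v, hv⟩ := hXne
  obtain ⟨f, hfinj, hfadj⟩ := exists_succ _ (hG v)
  set F : α → α := fun x => if h : x ∈ ({v}ᶜ : Set α) then (f ⟨x, h⟩ : α) else x with hF
  have hWsub : ∀ w ∈ W, w ∈ ({v}ᶜ : Set α) := by
    intro w hw
    simp only [Set.mem_compl_iff, Set.mem_singleton_iff]
    rintro rfl
    exact hv hw
  have hFval : ∀ w (hw : w ∈ ({v}ᶜ : Set α)), F w = (f ⟨w, hw⟩ : α) := by
    intro w hw
    simp only [hF, dif_pos hw]
  have hmaps : ∀ w ∈ W, F w ∈ Wᶜ \ {v} := by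
    intro w hw
    have hwv := hWsub w hw
    have hadj := hfadj ⟨w, hwv⟩
    have hGadj : G.Adj w (↑(f ⟨w, hwv⟩) : α) := by
      simpa using hadj
    rw [hFval w hwv]
    refine ⟨fun hmem => hedgeless w hw _ hmem hGadj, ?_⟩
    simp only [Set.mem_singleton_iff]
    exact (f ⟨w, hwv⟩).2
  have hinj : Set.InjOn F W := by
    intro w1 h1 w2 h2 he
    rw [hFval w1 (hWsub w1 h1), hFval w2 (hWsub w2 h2)] at he
    have := hfinj (Subtype.ext he)
    exact congrArg Subtype.val this
  have h1 : W.ncard ≤ (Wᶜ \ {v}).ncard :=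
    Set.ncard_le_ncard_of_injOn F hmaps hinj (Set.toFinite _)
  have h2 : (Wᶜ \ {v}).ncard < Wᶜ.ncard := by
    apply Set.ncard_lt_ncard _ (Set.toFinite _)
    exact Set.sdiff_singleton_ssubset.mpr hv
  omega
end
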